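/- arXiv:1611.09033 — 4 statements merged into one kernel-verified Lean document; each statement's English description precedes it below -/
import Mathlib

section
/- Let n ≥ 3 and let F be a set of edges of the convex complete graph K_n such that F contains no boundary edge of K_n and |F| ≤ n − 3. Then K_n − F admits a triangulation. -/
namespace ConvexTri

/-- `x` lies strictly inside the open arc from `a` to `b` (in the positive cyclic direction). -/
def InOpenArc (n : ℕ) (a b x : ZMod n) : Prop :=
  0 < (x - a).val ∧ (x - a).val < (b - a).val

/-- Two chords of the convex `n`-gon cross: the endpoints of one separate the endpoints of
the other on the cycle, i.e. exactly one endpoint of the second chord lies in each of the two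
open arcs determined by the endpoints of the first chord. -/
def Cross (n : ℕ) (e f : Sym2 (ZMod n)) : Prop :=
  ∃ a b c d : ZMod n, e = s(a, b) ∧ f = s(c, d) ∧
    InOpenArc n a b c ∧ InOpenArc n b a d

/-- Boundary edge of the convex `n`-gon. -/
def IsBoundary (n : ℕ) (e : Sym2 (ZMod n)) : Prop :=
  ∃ i : ZMod n, e = s(i, i + 1)

/-- A diagonal: an edge of `K_n` (a pair of distinct vertices) that is not a boundary edge. -/
def IsDiagonal (n : ℕ) (e : Sym2 (ZMod n)) : Prop :=
  ¬ e.IsDiag ∧ ¬ IsBoundary n e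

/-- `K_n - F` admits a triangulation: `F` contains no boundary edge and there is a set of
`n - 3` pairwise non-crossing diagonals disjoint from `F`. -/
def AdmitsTriangulation (n : ℕ) (F : Finset (Sym2 (ZMod n))) : Prop :=
  (∀ e ∈ F, ¬ IsBoundary n e) ∧
  ∃ T : Finset (Sym2 (ZMod n)), T.card = n - 3 ∧
    (∀ e ∈ T, IsDiagonal n e) ∧
    (∀ e ∈ T, ∀ f ∈ T, ¬ Cross n e f) ∧
    (∀ e ∈ T, e ∉ F)

/-- Degree of a vertex in an edge set. -/
def deg (n : ℕ) (F : Finset (Sym2 (ZMod n))) (v : ZMod n) : ℕ :=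
  (F.filter (fun e => v ∈ e)).card

/-- A pendant vertex of `F` is a vertex of degree 1. -/
def Pendant (n : ℕ) (F : Finset (Sym2 (ZMod n))) (v : ZMod n) : Prop :=
  deg n F v = 1

/-- `F` has no isolated vertices. -/
def NoIsolated (n : ℕ) (F : Finset (Sym2 (ZMod n))) : Prop :=
  ∀ v : ZMod n, 0 < deg n F v

/-- A relabeling of the vertices by a rotation and possibly a reflection of the cyclic order. -/
def IsDihedral (n : ℕ) (φ : ZMod n → ZMod n) : Prop :=
  (∃ c : ZMod n, φ = fun x => c + x) ∨ (∃ c : ZMod n, φ = fun x => c - x)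

/-- The explicit shape of the configuration `F_n(*)` (before relabeling). -/
def FStarShape (n : ℕ) (F : Finset (Sym2 (ZMod n))) : Prop :=
  F = (Finset.image (fun i : ℕ => s((0 : ZMod n), (i : ZMod n))) (Finset.Icc 2 (n - 2))) ∪
      {s((1 : ZMod n), (-1 : ZMod n))} ∨
  ∃ k : ℕ, 2 ≤ k ∧ k ≤ n - 4 ∧
    (∀ i : ℕ, i < k → 2 ≤ deg n F (i : ZMod n) ∧
      s((i : ZMod n) - 1, (i : ZMod n) + 1) ∈ F) ∧
    (∀ i : ℕ, k ≤ i → i ≤ n - 1 → deg n F (i : ZMod n) = 1 ∧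
      ∀ w : ZMod n, s((i : ZMod n), w) ∈ F → ¬ Pendant n F w) ∧
    (∀ u v i j : ZMod n, Pendant n F u → Pendant n F v →
      s(u, i) ∈ F → s(v, j) ∈ F → Cross n s(u, i) s(v, j) → i = j + 1 ∨ j = i + 1)

/-- `F` has the configuration `F_n(*)`. -/
def IsFStar (n : ℕ) (F : Finset (Sym2 (ZMod n))) : Prop :=
  (∀ e ∈ F, ¬ e.IsDiag) ∧ NoIsolated n F ∧ F.card = n - 2 ∧
  ∃ φ : ZMod n → ZMod n, IsDihedral n φ ∧ FStarShape n (F.image (Sym2.map φ))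

/-- Relabeling map after deleting the vertex `i`: the remaining `n - 1` vertices in their
induced cyclic order. -/
def delMap (n : ℕ) (i : ZMod n) (x : ZMod n) : ZMod (n - 1) :=
  (((x - i).val - 1 : ℕ) : ZMod (n - 1))

/-- `F` with the vertex `i` deleted, as an edge set on the remaining `n - 1` vertices
in their induced cyclic order. -/
def delete (n : ℕ) (F : Finset (Sym2 (ZMod n))) (i : ZMod n) :
    Finset (Sym2 (ZMod (n - 1))) :=
  (F.filter (fun e => i ∉ e)).image (Sym2.map (delMap n i))

/-- `F` has the configuration `J_n(*)`. -/
def IsJStar (n : ℕ) (F : Finset (Sym2 (ZMod n))) : Prop :=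
  (∀ e ∈ F, ¬ e.IsDiag) ∧ NoIsolated n F ∧ F.card = n - 1 ∧
  (∀ i : ZMod n, s(i - 1, i + 1) ∉ F → deg n F i ≤ 2) ∧
  (∀ i : ZMod n, s(i - 1, i + 1) ∉ F → deg n F i = 2 → IsFStar (n - 1) (delete n F i))

/-- `J_{n,k}`: the set of vertices `v_i` of degree `k` in `F` with `v_{i-1}v_{i+1} ∉ F`. -/
def Jset (n k : ℕ) (F : Finset (Sym2 (ZMod n))) : Set (ZMod n) :=
  {i | deg n F i = k ∧ s(i - 1, i + 1) ∉ F}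

/-- `F` is a configuration `J_n(*)` of Type-1. -/
def IsJStarType1 (n : ℕ) (F : Finset (Sym2 (ZMod n))) : Prop :=
  IsJStar n F ∧ Jset n 2 F = ∅ ∧ ∃ e ∈ F, IsFStar n (F.erase e)

/-- `F` is a configuration `J_n(*)` of Type-2. -/
def IsJStarType2 (n : ℕ) (F : Finset (Sym2 (ZMod n))) : Prop :=
  IsJStar n F ∧ (Jset n 2 F).Nonempty ∧
  ∀ i ∈ Jset n 2 F, ∀ j₁ j₂ t w : ZMod n,
    s(i, j₁) ∈ F → s(i, j₂) ∈ F → j₁ ≠ j₂ →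
    Pendant n F t → s(t, w) ∈ F →
    Cross n s(t, w) s(i, j₁) → Cross n s(t, w) s(i, j₂) →
    j₁ = w + 1 ∨ w = j₁ + 1 ∨ j₂ = w + 1 ∨ w = j₂ + 1

/-- A Hamiltonian cycle of the convex complete graph `K_n`, as an edge set. -/
def IsHamCycle (n : ℕ) (H : Finset (Sym2 (ZMod n))) : Prop :=
  ∃ g : ZMod n ≃ ZMod n,
    H = Finset.image (fun i : ℕ => s(g (i : ZMod n), g ((i : ZMod n) + 1)))
      (Finset.range n) ∧ H.card = n

/-- A graph `G` is potentially triangulable in `K_n` if its vertices can be placed injectively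
on the vertices of `K_n` so that `K_n` minus the image of the edge set of `G` admits a
triangulation. -/
def PotentiallyTriangulable {V : Type*} (G : SimpleGraph V) (n : ℕ) : Prop :=
  ∃ f : V → ZMod n, Function.Injective f ∧
    ∃ F' : Finset (Sym2 (ZMod n)),
      (F' : Set (Sym2 (ZMod n))) = Sym2.map f '' G.edgeSet ∧
      AdmitsTriangulation n F'


variable {n : ℕ}

lemma sym2_exists (e : Sym2 (ZMod n)) : ∃ a b : ZMod n, e = s(a, b) := by
  induction e using Sym2.ind with
  | _ a b => exact ⟨a, b, rfl⟩

lemma sub_val [NeZero n] (a b : ZMod n) : (a - b).val = (a.val + n - b.val) % n := by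
  have hb : b.val < n := ZMod.val_lt b
  have h : a - b = ((a.val + n - b.val : ℕ) : ZMod n) := by
    have : ((a.val + n - b.val : ℕ) : ZMod n) = ((a.val : ℕ) : ZMod n) + (n : ZMod n) - ((b.val : ℕ) : ZMod n) := by
      rw [Nat.cast_sub (by omega)]; push_cast; ring
    rw [this]
    simp [ZMod.natCast_val, ZMod.cast_id, ZMod.natCast_self]
  rw [h, ZMod.val_natCast]

def dd (n A X : ℕ) : ℕ := if A ≤ X then X - A else X + n - A

lemma mod_helper {P R : ℕ} (hP : P < n) (hR : R < n) :
    (R + n - P) % n = dd n P R := by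
  unfold dd
  split_ifs with h
  · have h2 : R + n - P = (R - P) + n := by omega
    rw [h2, Nat.add_mod_right, Nat.mod_eq_of_lt (by omega)]
  · exact Nat.mod_eq_of_lt (by omega)

lemma arc_iff [NeZero n] (a b x : ZMod n) :
    InOpenArc n a b x ↔ 0 < dd n a.val x.val ∧ dd n a.val x.val < dd n a.val b.val := by
  unfold InOpenArc
  rw [sub_val, sub_val, mod_helper (ZMod.val_lt a) (ZMod.val_lt x),
    mod_helper (ZMod.val_lt a) (ZMod.val_lt b)]

lemma val_eq_iff [NeZero n] (a b : ZMod n) : a = b ↔ a.val = b.val :=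
  ⟨fun h => by rw [h], fun h => ZMod.val_injective n h⟩

lemma boundary_iff (a b : ZMod n) : IsBoundary n s(a, b) ↔ b = a + 1 ∨ a = b + 1 := by
  constructor
  · rintro ⟨i, h⟩
    rw [Sym2.eq_iff] at h
    rcases h with ⟨rfl, rfl⟩ | ⟨rfl, rfl⟩
    · left; rfl
    · right; rfl
  · rintro (rfl | rfl)
    · exact ⟨a, rfl⟩
    · exact ⟨b, Sym2.eq_swap⟩

lemma not_cross_of_mem [NeZero n] {e f : Sym2 (ZMod n)} (x : ZMod n)
    (hx : x ∈ e) (hy : x ∈ f) : ¬ Cross n e f := by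
  rintro ⟨a, b, c, d, rfl, rfl, h1, h2⟩
  rw [Sym2.mem_iff] at hx hy
  unfold InOpenArc at h1 h2
  rcases hx with rfl | rfl <;> rcases hy with rfl | rfl <;> simp_all


variable {n : ℕ}

lemma rot_arc (c a b x : ZMod n) : InOpenArc n (a + c) (b + c) (x + c) ↔ InOpenArc n a b x := by
  unfold InOpenArc
  have h1 : x + c - (a + c) = x - a := by ring
  have h2 : b + c - (a + c) = b - a := by ring
  rw [h1, h2]

lemma rot_cross_fwd (c : ZMod n) (e f : Sym2 (ZMod n)) (h : Cross n e f) :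
    Cross n (Sym2.map (· + c) e) (Sym2.map (· + c) f) := by
  obtain ⟨a, b, x, y, rfl, rfl, h1, h2⟩ := h
  exact ⟨a + c, b + c, x + c, y + c, by simp, by simp,
    (rot_arc c a b x).mpr h1, (rot_arc c b a y).mpr h2⟩

lemma rot_map_map (c : ZMod n) (e : Sym2 (ZMod n)) :
    Sym2.map (· + (-c)) (Sym2.map (· + c) e) = e := by
  rw [Sym2.map_map]
  have : ((· + (-c)) ∘ (· + c) : ZMod n → ZMod n) = id := by funext x; simp
  rw [this, Sym2.map_id]; rfl

lemma rot_cross (c : ZMod n) (e f : Sym2 (ZMod n)) :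
    Cross n (Sym2.map (· + c) e) (Sym2.map (· + c) f) ↔ Cross n e f := by
  refine ⟨fun h => ?_, rot_cross_fwd c e f⟩
  have := rot_cross_fwd (-c) _ _ h
  rwa [rot_map_map, rot_map_map] at this

lemma rot_bdry_fwd (c : ZMod n) (e : Sym2 (ZMod n)) (h : IsBoundary n e) :
    IsBoundary n (Sym2.map (· + c) e) := by
  obtain ⟨i, rfl⟩ := h
  exact ⟨i + c, by simp [add_right_comm]⟩

lemma rot_bdry (c : ZMod n) (e : Sym2 (ZMod n)) :
    IsBoundary n (Sym2.map (· + c) e) ↔ IsBoundary n e := by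
  refine ⟨fun h => ?_, rot_bdry_fwd c e⟩
  have := rot_bdry_fwd (-c) _ h
  rwa [rot_map_map] at this

lemma rot_inj (c : ZMod n) : Function.Injective (Sym2.map (· + c) : Sym2 (ZMod n) → Sym2 (ZMod n)) :=
  Sym2.map.injective (fun x y h => by simpa using h)

lemma rot_diag (c : ZMod n) (e : Sym2 (ZMod n)) :
    (Sym2.map (· + c) e).IsDiag ↔ e.IsDiag := by
  induction e using Sym2.ind with
  | _ a b => simp [Sym2.mk_isDiag_iff]

lemma admits_of_rot (c : ZMod n) (F : Finset (Sym2 (ZMod n)))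
    (hB : ∀ e ∈ F, ¬ IsBoundary n e)
    (h : AdmitsTriangulation n (F.image (Sym2.map (· + c)))) :
    AdmitsTriangulation n F := by
  obtain ⟨-, T, hcard, hdiag, hnc, hdisj⟩ := h
  refine ⟨hB, T.image (Sym2.map (· + (-c))), ?_, ?_, ?_, ?_⟩
  · rw [Finset.card_image_of_injective _ (rot_inj (-c))]; exact hcard
  · rintro e' he'
    obtain ⟨e, he, rfl⟩ := Finset.mem_image.mp he'
    obtain ⟨hd1, hd2⟩ := hdiag e he
    constructor
    · intro hd; apply hd1
      have := (rot_diag (-c) e).mp hd  -- hd : (map e).IsDiag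
      exact this
    · intro hb; apply hd2
      have := rot_bdry_fwd c _ hb
      rw [show (Sym2.map (· + c) (Sym2.map (· + (-c)) e)) = e by
        have := rot_map_map (-c) e; simpa using this] at this
      exact this
  · rintro e' he' f' hf' hc
    obtain ⟨e, he, rfl⟩ := Finset.mem_image.mp he'
    obtain ⟨f, hf, rfl⟩ := Finset.mem_image.mp hf'
    have := rot_cross_fwd c _ _ hc
    rw [show (Sym2.map (· + c) (Sym2.map (· + (-c)) e)) = e by
        have := rot_map_map (-c) e; simpa using this,
      show (Sym2.map (· + c) (Sym2.map (· + (-c)) f)) = f by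
        have := rot_map_map (-c) f; simpa using this] at this
    exact hnc e he f hf this
  · rintro e' he' hmem
    obtain ⟨e, he, rfl⟩ := Finset.mem_image.mp he'
    apply hdisj e he
    refine Finset.mem_image.mpr ⟨_, hmem, ?_⟩
    have := rot_map_map (-c) e; simpa using this

lemma val_add_one [NeZero n] (a : ZMod n) : (a + 1).val = (a.val + 1) % n := by
  have h : a + 1 = ((a.val + 1 : ℕ) : ZMod n) := by
    push_cast
    simp [ZMod.natCast_val, ZMod.cast_id]
  rw [h, ZMod.val_natCast]

lemma fan (hn : 3 ≤ n) :
    ∃ T : Finset (Sym2 (ZMod n)), T.card = n - 3 ∧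
      (∀ e ∈ T, IsDiagonal n e) ∧ (∀ e ∈ T, ∀ f ∈ T, ¬ Cross n e f) := by
  have : NeZero n := ⟨by omega⟩
  refine ⟨(Finset.Icc 2 (n - 2)).image (fun j : ℕ => s((0 : ZMod n), (j : ZMod n))), ?_, ?_, ?_⟩
  · rw [Finset.card_image_of_injOn, Nat.card_Icc]
    · omega
    · intro j hj k hk hjk
      simp only [Finset.coe_Icc, Set.mem_Icc] at hj hk
      rw [Sym2.eq_iff] at hjk
      have hj' : ((j : ZMod n)).val = j := by rw [ZMod.val_natCast, Nat.mod_eq_of_lt (by omega)]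
      have hk' : ((k : ZMod n)).val = k := by rw [ZMod.val_natCast, Nat.mod_eq_of_lt (by omega)]
      rcases hjk with ⟨-, h⟩ | ⟨h, h'⟩
      · rw [val_eq_iff, hj', hk'] at h; exact h
      · rw [val_eq_iff, hk'] at h; simp at h; omega
  · rintro e he
    obtain ⟨j, hj, rfl⟩ := Finset.mem_image.mp he
    simp only [Finset.mem_Icc] at hj
    have hj' : ((j : ZMod n)).val = j := by rw [ZMod.val_natCast, Nat.mod_eq_of_lt (by omega)]
    constructor
    · rw [Sym2.mk_isDiag_iff, val_eq_iff, hj']; simp; omega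
    · rw [boundary_iff]
      rintro (h | h)
      · rw [val_eq_iff, hj', val_add_one, ZMod.val_zero, Nat.mod_eq_of_lt (by omega)] at h
        omega
      · rw [val_eq_iff, ZMod.val_zero, val_add_one, hj', Nat.mod_eq_of_lt (by omega)] at h
        omega
  · rintro e he f hf
    obtain ⟨j, hj, rfl⟩ := Finset.mem_image.mp he
    obtain ⟨k, hk, rfl⟩ := Finset.mem_image.mp hf
    exact not_cross_of_mem (0 : ZMod n) (by simp) (by simp)

lemma neg_two_val (hn : 3 ≤ n) : ((-2 : ZMod n)).val = n - 2 := by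
  have : NeZero n := ⟨by omega⟩
  have h : (-2 : ZMod n) = ((n - 2 : ℕ) : ZMod n) := by
    rw [Nat.cast_sub (by omega : 2 ≤ n)]
    simp
  rw [h, ZMod.val_natCast, Nat.mod_eq_of_lt (by omega)]

lemma neg_one_val (hn : 2 ≤ n) : ((-1 : ZMod n)).val = n - 1 := by
  have : NeZero n := ⟨by omega⟩
  have h : (-1 : ZMod n) = ((n - 1 : ℕ) : ZMod n) := by
    rw [Nat.cast_sub (by omega : 1 ≤ n)]
    simp
  rw [h, ZMod.val_natCast, Nat.mod_eq_of_lt (by omega)]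

def projm (n : ℕ) (x : ZMod n) : ZMod (n - 1) := ((x.val : ℕ) : ZMod (n - 1))

def liftm (n : ℕ) (j : ZMod (n - 1)) : ZMod n := ((j.val : ℕ) : ZMod n)

lemma liftm_val (hn : 2 ≤ n) (j : ZMod (n - 1)) : (liftm n j).val = j.val := by
  have : NeZero (n - 1) := ⟨by omega⟩
  have hj : j.val < n - 1 := ZMod.val_lt j
  rw [liftm, ZMod.val_natCast, Nat.mod_eq_of_lt (by omega)]

lemma projm_val (hn : 2 ≤ n) (x : ZMod n) (hx : x.val ≤ n - 2) :
    (projm n x).val = x.val := by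
  rw [projm, ZMod.val_natCast, Nat.mod_eq_of_lt (by omega)]

lemma proj_liftm (hn : 2 ≤ n) (j : ZMod (n - 1)) : projm n (liftm n j) = j := by
  have : NeZero (n - 1) := ⟨by omega⟩
  rw [projm, liftm_val hn]
  simp [ZMod.natCast_val, ZMod.cast_id]

lemma liftm_inj (hn : 2 ≤ n) : Function.Injective (liftm n) := by
  intro a b h
  have := congrArg (projm n) h
  rwa [proj_liftm hn, proj_liftm hn] at this

lemma arc_lift (hn : 2 ≤ n) (p q r : ZMod (n - 1))
    (h : InOpenArc n (liftm n p) (liftm n q) (liftm n r)) : InOpenArc (n - 1) p q r := by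
  have : NeZero n := ⟨by omega⟩
  have : NeZero (n - 1) := ⟨by omega⟩
  rw [arc_iff] at h ⊢
  rw [liftm_val hn, liftm_val hn, liftm_val hn] at h
  have hp : p.val < n - 1 := ZMod.val_lt p
  have hq : q.val < n - 1 := ZMod.val_lt q
  have hr : r.val < n - 1 := ZMod.val_lt r
  unfold dd at h ⊢
  split_ifs at h ⊢ <;> omega

lemma cross_lift (hn : 2 ≤ n) (e f : Sym2 (ZMod (n - 1)))
    (h : Cross n (Sym2.map (liftm n) e) (Sym2.map (liftm n) f)) : Cross (n - 1) e f := by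
  induction e using Sym2.ind with
  | _ x y =>
    induction f using Sym2.ind with
    | _ u v =>
      obtain ⟨a, b, c, d, hab, hcd, h1, h2⟩ := h
      rw [Sym2.map_pair_eq, Sym2.eq_iff] at hab hcd
      rcases hab with ⟨ha, hb⟩ | ⟨ha, hb⟩ <;> rcases hcd with ⟨hc, hd⟩ | ⟨hc, hd⟩ <;>
        subst ha <;> subst hb <;> subst hc <;> subst hd
      · exact ⟨x, y, u, v, rfl, rfl, arc_lift hn _ _ _ h1, arc_lift hn _ _ _ h2⟩
      · exact ⟨x, y, v, u, rfl, Sym2.eq_swap, arc_lift hn _ _ _ h1, arc_lift hn _ _ _ h2⟩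
      · exact ⟨y, x, u, v, Sym2.eq_swap, rfl, arc_lift hn _ _ _ h1, arc_lift hn _ _ _ h2⟩
      · exact ⟨y, x, v, u, Sym2.eq_swap, Sym2.eq_swap, arc_lift hn _ _ _ h1, arc_lift hn _ _ _ h2⟩

lemma ear_not_cross (hn : 4 ≤ n) (f : Sym2 (ZMod n)) (hf : ∀ x ∈ f, x.val ≤ n - 2) :
    ¬ Cross n s((0 : ZMod n), (-2 : ZMod n)) f := by
  have : NeZero n := ⟨by omega⟩
  rintro ⟨a, b, c, d, hab, hcd, h1, h2⟩
  have hc : c.val ≤ n - 2 := hf c (by rw [hcd]; exact Sym2.mem_mk_left c d)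
  have hd : d.val ≤ n - 2 := hf d (by rw [hcd]; exact Sym2.mem_mk_right c d)
  rw [Sym2.eq_iff] at hab
  rw [arc_iff] at h1 h2
  have hcv : c.val < n := ZMod.val_lt c
  have hdv : d.val < n := ZMod.val_lt d
  rcases hab with ⟨rfl, rfl⟩ | ⟨rfl, rfl⟩ <;>
    simp only [ZMod.val_zero, neg_two_val (by omega : 3 ≤ n)] at h1 h2 <;>
    unfold dd at h1 h2 <;> split_ifs at h1 h2 <;> omega

lemma not_cross_ear (hn : 4 ≤ n) (f : Sym2 (ZMod n)) (hf : ∀ x ∈ f, x.val ≤ n - 2) :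
    ¬ Cross n f s((0 : ZMod n), (-2 : ZMod n)) := by
  have : NeZero n := ⟨by omega⟩
  rintro ⟨a, b, c, d, hab, hcd, h1, h2⟩
  have ha : a.val ≤ n - 2 := hf a (by rw [hab]; exact Sym2.mem_mk_left a b)
  have hb : b.val ≤ n - 2 := hf b (by rw [hab]; exact Sym2.mem_mk_right a b)
  rw [Sym2.eq_iff] at hcd
  rw [arc_iff] at h1 h2
  have hav : a.val < n := ZMod.val_lt a
  have hbv : b.val < n := ZMod.val_lt b
  rcases hcd with ⟨rfl, rfl⟩ | ⟨rfl, rfl⟩ <;>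
    simp only [ZMod.val_zero, neg_two_val (by omega : 3 ≤ n)] at h1 h2 <;>
    unfold dd at h1 h2 <;> split_ifs at h1 h2 <;> omega


lemma ne_neg_one_iff (hn : 2 ≤ n) (x : ZMod n) : x ≠ -1 ↔ x.val ≤ n - 2 := by
  have : NeZero n := ⟨by omega⟩
  have hx : x.val < n := ZMod.val_lt x
  rw [Ne, val_eq_iff, neg_one_val hn]
  omega

lemma cut (hn : 4 ≤ n) (G : Finset (Sym2 (ZMod n)))
    (hE : ∀ e ∈ G, ¬ e.IsDiag) (hB : ∀ e ∈ G, ¬ IsBoundary n e)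
    (hcard : G.card ≤ n - 3)
    (hdeg : ∃ e ∈ G, (-1 : ZMod n) ∈ e)
    (hear : s((0 : ZMod n), (-2 : ZMod n)) ∉ G)
    (IH : ∀ F' : Finset (Sym2 (ZMod (n - 1))), (∀ e ∈ F', ¬ e.IsDiag) →
      (∀ e ∈ F', ¬ IsBoundary (n - 1) e) → F'.card ≤ (n - 1) - 3 →
      AdmitsTriangulation (n - 1) F') :
    AdmitsTriangulation n G := by
  have hzn : NeZero n := ⟨by omega⟩
  have hzn' : NeZero (n - 1) := ⟨by omega⟩
  have h2n : (2 : ℕ) ≤ n := by omega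
  -- the filtered set
  set G₀ : Finset (Sym2 (ZMod n)) := G.filter (fun e => (-1 : ZMod n) ∉ e) with hG₀
  set F' : Finset (Sym2 (ZMod (n - 1))) := G₀.image (Sym2.map (projm n)) with hF'
  -- endpoints of G₀ edges have small values
  have hG₀vals : ∀ e ∈ G₀, ∀ x ∈ e, x.val ≤ n - 2 := by
    intro e he x hx
    rw [hG₀, Finset.mem_filter] at he
    exact (ne_neg_one_iff h2n x).mp (fun h => he.2 (h ▸ hx))
  -- big non-boundaryness in terms of vals
  have bigbd : ∀ a b : ZMod n, s(a, b) ∈ G → b.val ≠ a.val + 1 ∧ a.val ≠ b.val + 1 := by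
    intro a b hab
    have h := hB _ hab
    rw [boundary_iff] at h
    push_neg at h
    obtain ⟨h1, h2⟩ := h
    rw [Ne, val_eq_iff, val_add_one] at h1 h2
    have hav : a.val < n := ZMod.val_lt a
    have hbv : b.val < n := ZMod.val_lt b
    constructor
    · intro hc
      rcases Nat.lt_or_ge (a.val + 1) n with h' | h'
      · rw [Nat.mod_eq_of_lt h'] at h1; omega
      · omega
    · intro hc
      rcases Nat.lt_or_ge (b.val + 1) n with h' | h'
      · rw [Nat.mod_eq_of_lt h'] at h2; omega
      · omega
  -- properties of F'
  have hE' : ∀ e ∈ F', ¬ e.IsDiag := by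
    intro e' he'
    obtain ⟨e, he, rfl⟩ := Finset.mem_image.mp he'
    obtain ⟨a, b, rfl⟩ := sym2_exists e
    have hA : a.val ≤ n - 2 := hG₀vals _ he a (Sym2.mem_mk_left a b)
    have hB' : b.val ≤ n - 2 := hG₀vals _ he b (Sym2.mem_mk_right a b)
    have hab : a ≠ b := by
      intro h
      exact hE _ (Finset.mem_of_mem_filter _ (hG₀ ▸ he)) (by rw [h]; exact Sym2.mk_isDiag_iff.mpr rfl)
    rw [Sym2.map_pair_eq, Sym2.mk_isDiag_iff]
    intro h
    apply hab
    rw [val_eq_iff] at h ⊢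
    rwa [projm_val h2n _ hA, projm_val h2n _ hB'] at h
  have hBd' : ∀ e ∈ F', ¬ IsBoundary (n - 1) e := by
    intro e' he'
    obtain ⟨e, he, rfl⟩ := Finset.mem_image.mp he'
    obtain ⟨a, b, rfl⟩ := sym2_exists e
    have hA : a.val ≤ n - 2 := hG₀vals _ he a (Sym2.mem_mk_left a b)
    have hBv : b.val ≤ n - 2 := hG₀vals _ he b (Sym2.mem_mk_right a b)
    have heG : s(a, b) ∈ G := Finset.mem_of_mem_filter _ (hG₀ ▸ he)
    have hbig := bigbd a b heG
    rw [Sym2.map_pair_eq, boundary_iff]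
    have hpa : (projm n a).val = a.val := projm_val h2n _ hA
    have hpb : (projm n b).val = b.val := projm_val h2n _ hBv
    rintro (h | h) <;> rw [val_eq_iff, val_add_one] at h
    · rw [hpa, hpb] at h
      rcases Nat.lt_or_ge (a.val + 1) (n - 1) with h' | h'
      · rw [Nat.mod_eq_of_lt h'] at h; omega
      · -- a.val = n - 2, b.val = 0
        have ha2 : a.val = n - 2 := by omega
        have h9 : a.val + 1 = n - 1 := by omega
        have hb0 : b.val = 0 := by rw [h9, Nat.mod_self] at h; exact h
        have ha' : a = -2 := by rw [val_eq_iff, neg_two_val (by omega : 3 ≤ n), ha2]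
        have hb' : b = 0 := (ZMod.val_eq_zero b).mp hb0
        apply hear
        rw [← ha', ← hb'] at *
        rw [Sym2.eq_swap] at heG
        exact heG
    · rw [hpa, hpb] at h
      rcases Nat.lt_or_ge (b.val + 1) (n - 1) with h' | h'
      · rw [Nat.mod_eq_of_lt h'] at h; omega
      · have hb2 : b.val = n - 2 := by omega
        have h9 : b.val + 1 = n - 1 := by omega
        have ha0 : a.val = 0 := by rw [h9, Nat.mod_self] at h; exact h
        have hb' : b = -2 := by rw [val_eq_iff, neg_two_val (by omega : 3 ≤ n), hb2]
        have ha' : a = 0 := (ZMod.val_eq_zero a).mp ha0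
        apply hear
        rw [← ha', ← hb'] at *
        exact heG
  have hcard' : F'.card ≤ (n - 1) - 3 := by
    obtain ⟨e₀, he₀, hm₀⟩ := hdeg
    have hne : e₀ ∉ G₀ := by
      rw [hG₀, Finset.mem_filter]
      intro h
      exact h.2 hm₀
    have hss : G₀ ⊂ G := by
      rw [hG₀]
      constructor
      · exact Finset.filter_subset _ _
      · intro h
        exact hne (hG₀ ▸ (h he₀))
    have hlt : G₀.card < G.card := Finset.card_lt_card hss
    have him : F'.card ≤ G₀.card := by
      rw [hF']
      exact Finset.card_image_le
    omega
  obtain ⟨-, T', hcardT, hdiagT, hncT, hdisjT⟩ := IH F' hE' hBd' hcard'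
  -- lift
  set L : Sym2 (ZMod (n - 1)) → Sym2 (ZMod n) := Sym2.map (liftm n) with hL
  have hLinj : Function.Injective L := Sym2.map.injective (liftm_inj h2n)
  have hLvals : ∀ t : Sym2 (ZMod (n - 1)), ∀ x ∈ L t, x.val ≤ n - 2 := by
    intro t x hx
    rw [hL] at hx
    obtain ⟨y, hy, rfl⟩ := Sym2.mem_map.mp hx
    rw [liftm_val h2n]
    have := ZMod.val_lt y
    omega
  have hPL : ∀ t, Sym2.map (projm n) (L t) = t := by
    intro t
    rw [hL, Sym2.map_map]
    have h : (projm n ∘ liftm n) = id := funext (proj_liftm h2n)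
    rw [h, Sym2.map_id]
    rfl
  have hLnotear : ∀ t ∈ T', L t ≠ s((0 : ZMod n), (-2 : ZMod n)) := by
    intro t ht h
    have := congrArg (Sym2.map (projm n)) h
    rw [hPL] at this
    have hp0 : projm n (0 : ZMod n) = 0 := by
      rw [projm, ZMod.val_zero]; simp
    have hp2 : projm n (-2 : ZMod n) = -1 := by
      rw [projm, neg_two_val (by omega : 3 ≤ n), val_eq_iff, ZMod.val_natCast,
        Nat.mod_eq_of_lt (by omega), neg_one_val (by omega : 2 ≤ n - 1)]
      omega
    rw [Sym2.map_pair_eq, hp0, hp2] at this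
    have hbd : IsBoundary (n - 1) t := by
      rw [this, boundary_iff]
      right
      rw [neg_add_cancel]
    exact (hdiagT t ht).2 hbd
  refine ⟨hB, insert s((0 : ZMod n), (-2 : ZMod n)) (T'.image L), ?_, ?_, ?_, ?_⟩
  · rw [Finset.card_insert_of_notMem, Finset.card_image_of_injective _ hLinj, hcardT]
    · omega
    · intro h
      obtain ⟨t, ht, hLt⟩ := Finset.mem_image.mp h
      exact hLnotear t ht hLt
  · intro e he
    rcases Finset.mem_insert.mp he with rfl | he'
    · constructor
      · rw [Sym2.mk_isDiag_iff]
        rw [val_eq_iff, ZMod.val_zero, neg_two_val (by omega : 3 ≤ n)]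
        omega
      · rw [boundary_iff]
        rintro (h | h) <;> rw [val_eq_iff, val_add_one] at h
        · rw [neg_two_val (by omega : 3 ≤ n), ZMod.val_zero, Nat.mod_eq_of_lt (by omega)] at h
          omega
        · rw [ZMod.val_zero, neg_two_val (by omega : 3 ≤ n), Nat.mod_eq_of_lt (by omega)] at h
          omega
    · obtain ⟨t, ht, rfl⟩ := Finset.mem_image.mp he'
      obtain ⟨p, q, rfl⟩ := sym2_exists t
      obtain ⟨hd1, hd2⟩ := hdiagT _ ht
      rw [Sym2.mk_isDiag_iff] at hd1
      rw [boundary_iff] at hd2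
      push_neg at hd2
      obtain ⟨hd21, hd22⟩ := hd2
      have hP : p.val < n - 1 := ZMod.val_lt p
      have hQ : q.val < n - 1 := ZMod.val_lt q
      rw [hL, Sym2.map_pair_eq]
      constructor
      · rw [Sym2.mk_isDiag_iff]
        intro h
        exact hd1 (liftm_inj h2n h)
      · rw [boundary_iff]
        rw [Ne, val_eq_iff, val_add_one] at hd21 hd22
        rintro (h | h) <;> rw [val_eq_iff, val_add_one, liftm_val h2n, liftm_val h2n] at h
        · rw [Nat.mod_eq_of_lt (by omega)] at h
          rcases Nat.lt_or_ge (p.val + 1) (n - 1) with h' | h'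
          · rw [Nat.mod_eq_of_lt h'] at hd21; omega
          · omega
        · rw [Nat.mod_eq_of_lt (by omega)] at h
          rcases Nat.lt_or_ge (q.val + 1) (n - 1) with h' | h'
          · rw [Nat.mod_eq_of_lt h'] at hd22; omega
          · omega
  · intro e he f hf
    rcases Finset.mem_insert.mp he with rfl | he' <;> rcases Finset.mem_insert.mp hf with rfl | hf'
    · exact not_cross_of_mem (0 : ZMod n) (Sym2.mem_mk_left _ _) (Sym2.mem_mk_left _ _)
    · obtain ⟨t, ht, rfl⟩ := Finset.mem_image.mp hf'
      exact ear_not_cross hn _ (hLvals t)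
    · obtain ⟨t, ht, rfl⟩ := Finset.mem_image.mp he'
      exact not_cross_ear hn _ (hLvals t)
    · obtain ⟨t, ht, rfl⟩ := Finset.mem_image.mp he'
      obtain ⟨u, hu, rfl⟩ := Finset.mem_image.mp hf'
      intro h
      exact hncT t ht u hu (cross_lift h2n _ _ h)
  · intro e he hmem
    rcases Finset.mem_insert.mp he with rfl | he'
    · exact hear hmem
    · obtain ⟨t, ht, rfl⟩ := Finset.mem_image.mp he'
      apply hdisjT t ht
      rw [hF']
      refine Finset.mem_image.mpr ⟨L t, ?_, hPL t⟩
      rw [hG₀, Finset.mem_filter]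
      refine ⟨hmem, ?_⟩
      intro h
      have := hLvals t _ h
      rw [neg_one_val h2n] at this
      omega


lemma n3_empty (F : Finset (Sym2 (ZMod 3)))
    (hE : ∀ e ∈ F, ¬ e.IsDiag) (hB : ∀ e ∈ F, ¬ IsBoundary 3 e) : F = ∅ := by
  rw [Finset.eq_empty_iff_forall_notMem]
  intro e he
  obtain ⟨a, b, rfl⟩ := sym2_exists e
  have h1 := hE _ he
  have h2 := hB _ he
  rw [Sym2.mk_isDiag_iff] at h1
  rw [boundary_iff] at h2
  have key : ∀ a b : ZMod 3, a ≠ b → ¬(b = a + 1 ∨ a = b + 1) → False := by decide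
  exact key a b h1 h2

lemma exists_good (hn : 4 ≤ n) (F : Finset (Sym2 (ZMod n)))
    (hcard : F.card ≤ n - 3) (hne : F.Nonempty) :
    ∃ i : ZMod n, (∃ e ∈ F, i ∈ e) ∧ s(i - 1, i + 1) ∉ F := by
  have : NeZero n := ⟨by omega⟩
  by_contra hcon
  push_neg at hcon
  obtain ⟨e₀, he₀⟩ := hne
  obtain ⟨a₀, b₀, rfl⟩ := sym2_exists e₀
  have step : ∀ v : ZMod n, (∃ e ∈ F, v ∈ e) → (∃ e ∈ F, (v + 1) ∈ e) := by
    intro v hv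
    exact ⟨_, hcon v hv, by rw [Sym2.mem_iff]; right; rfl⟩
  have all : ∀ k : ℕ, ∃ e ∈ F, (a₀ + (k : ZMod n)) ∈ e := by
    intro k
    induction k with
    | zero => exact ⟨_, he₀, by simp⟩
    | succ m ih =>
      have h := step _ ih
      rwa [show (a₀ + (m : ZMod n) + 1) = a₀ + (((m + 1 : ℕ)) : ZMod n) by push_cast; ring] at h
  have allv : ∀ v : ZMod n, s(v - 1, v + 1) ∈ F := by
    intro v
    apply hcon
    have h := all (v - a₀).val
    rwa [show a₀ + (((v - a₀).val : ℕ) : ZMod n) = v by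
      rw [ZMod.natCast_val, ZMod.cast_id]; ring] at h
  have himg : Finset.univ.image (fun v : ZMod n => s(v - 1, v + 1)) ⊆ F := by
    intro e he
    obtain ⟨v, -, rfl⟩ := Finset.mem_image.mp he
    exact allv v
  have hcard2 := Finset.card_le_card himg
  rcases Nat.lt_or_ge n 5 with h5 | h5
  · interval_cases n
    have h01 : ({s((0 : ZMod 4) - 1, (0 : ZMod 4) + 1), s((1 : ZMod 4) - 1, (1 : ZMod 4) + 1)} :
        Finset (Sym2 (ZMod 4))) ⊆ Finset.univ.image (fun v : ZMod 4 => s(v - 1, v + 1)) := by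
      intro e he
      rcases Finset.mem_insert.mp he with rfl | he'
      · exact Finset.mem_image.mpr ⟨0, Finset.mem_univ _, rfl⟩
      · rw [Finset.mem_singleton] at he'
        subst he'
        exact Finset.mem_image.mpr ⟨1, Finset.mem_univ _, rfl⟩
    have hd2 : ({s((0 : ZMod 4) - 1, (0 : ZMod 4) + 1), s((1 : ZMod 4) - 1, (1 : ZMod 4) + 1)} :
        Finset (Sym2 (ZMod 4))).card = 2 := by decide
    have := Finset.card_le_card h01
    omega
  · have hinj : Function.Injective (fun v : ZMod n => s(v - 1, v + 1)) := by
      intro u v h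
      simp only [Sym2.eq_iff] at h
      rcases h with ⟨h1, h2⟩ | ⟨h1, h2⟩
      · exact sub_left_inj.mp h1
      · exfalso
        have h4 : ((4 : ℕ) : ZMod n) = 0 := by push_cast; linear_combination h2 - h1
        have hdvd := (ZMod.natCast_eq_zero_iff 4 n).mp h4
        have := Nat.le_of_dvd (by norm_num) hdvd
        omega
    rw [Finset.card_image_of_injective _ hinj, Finset.card_univ, ZMod.card] at hcard2
    omega

theorem main : ∀ n : ℕ, 3 ≤ n → ∀ F : Finset (Sym2 (ZMod n)),
    (∀ e ∈ F, ¬ e.IsDiag) → (∀ e ∈ F, ¬ IsBoundary n e) → F.card ≤ n - 3 →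
    AdmitsTriangulation n F := by
  intro n
  induction n using Nat.strong_induction_on with
  | _ n IH =>
    intro hn F hE hB hcard
    have hzn : NeZero n := ⟨by omega⟩
    rcases Finset.eq_empty_or_nonempty F with rfl | hne
    · obtain ⟨T, h1, h2, h3⟩ := fan hn
      exact ⟨by simp, T, h1, h2, h3, by simp⟩
    · rcases Nat.lt_or_ge n 4 with h4 | h4
      · interval_cases n
        have h := n3_empty F hE hB
        rw [h] at hne
        exact absurd hne (by simp)
      · obtain ⟨i, ⟨e₁, he₁, hie₁⟩, heari⟩ := exists_good h4 F hcard hne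
        set c : ZMod n := -1 - i with hc
        apply admits_of_rot c F hB
        apply cut h4
        · intro e' he'
          obtain ⟨e, he, rfl⟩ := Finset.mem_image.mp he'
          intro hd
          exact hE e he ((rot_diag c e).mp hd)
        · intro e' he'
          obtain ⟨e, he, rfl⟩ := Finset.mem_image.mp he'
          intro hb
          exact hB e he ((rot_bdry c e).mp hb)
        · rw [Finset.card_image_of_injective _ (rot_inj c)]; exact hcard
        · refine ⟨Sym2.map (· + c) e₁, Finset.mem_image_of_mem _ he₁, ?_⟩
          have h : i + c = -1 := by rw [hc]; ring
          rw [← h]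
          exact Sym2.mem_map.mpr ⟨i, hie₁, rfl⟩
        · intro h
          obtain ⟨e, he, heq⟩ := Finset.mem_image.mp h
          apply heari
          have he2 : e = s((0 : ZMod n) + (-c), (-2 : ZMod n) + (-c)) := by
            have h3 := congrArg (Sym2.map (· + (-c))) heq
            rw [rot_map_map, Sym2.map_pair_eq] at h3
            exact h3
          rw [he2] at he
          have hswap : s((0 : ZMod n) + -c, (-2 : ZMod n) + -c) = s(i - 1, i + 1) := by
            rw [Sym2.eq_iff]
            right
            constructor <;> (rw [hc]; ring)
          rwa [hswap] at he
        · intro F'' hE'' hB'' hc''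
          exact IH (n - 1) (by omega) (by omega) F'' hE'' hB'' hc''


/-- If `F` is a set of edges of the convex `K_n` (`n ≥ 3`) containing no boundary
edge with `|F| ≤ n - 3`, then `K_n - F` admits a triangulation. -/
theorem stmt0 (n : ℕ) (hn : 3 ≤ n) (F : Finset (Sym2 (ZMod n)))
    (hE : ∀ e ∈ F, ¬ e.IsDiag) (hB : ∀ e ∈ F, ¬ IsBoundary n e)
    (hcard : F.card ≤ n - 3) :
    AdmitsTriangulation n F :=
  main n hn F hE hB hcard

end ConvexTri
end

section
/- Let n ≥ 3. The cycle C_n on n vertices is potentially triangulable in the convex complete graph K_n if and only if n ≥ 7. Equivalently: there exists a set H of n edges of K_n forming a Hamiltonian cycle through all n vertices such that K_n − H admits a triangulation, if and only if n ≥ 7. -/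
namespace ConvexTri

/-! ### Auxiliary material -/

instance (n : ℕ) (a b x : ZMod n) : Decidable (InOpenArc n a b x) := by
  unfold InOpenArc; infer_instance
instance (n : ℕ) [NeZero n] (e f : Sym2 (ZMod n)) : Decidable (Cross n e f) := by
  unfold Cross; infer_instance
instance (n : ℕ) [NeZero n] (e : Sym2 (ZMod n)) : Decidable (IsBoundary n e) := by
  unfold IsBoundary; infer_instance
instance (n : ℕ) [NeZero n] (e : Sym2 (ZMod n)) : Decidable (IsDiagonal n e) := by
  unfold IsDiagonal; infer_instance

lemma val_sub {m : ℕ} [NeZero m] (a b : ZMod m) :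
    (a - b).val = if b.val ≤ a.val then a.val - b.val else m + a.val - b.val := by
  have hb : b.val ≤ m + a.val := le_add_of_le_of_nonneg (le_of_lt (ZMod.val_lt b)) (Nat.zero_le _)
  have h1 : ((m + a.val - b.val : ℕ) : ZMod m) = a - b := by
    push_cast [Nat.cast_sub hb]
    simp [ZMod.natCast_self, ZMod.natCast_rightInverse a, ZMod.natCast_rightInverse b]
  rw [← h1, ZMod.val_natCast]
  rcases le_or_gt b.val a.val with h | h
  · have h2 : m + a.val - b.val = m + (a.val - b.val) := by omega
    rw [if_pos h, h2, Nat.add_mod_left, Nat.mod_eq_of_lt (by have := ZMod.val_lt a; omega)]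
  · rw [if_neg (by omega), Nat.mod_eq_of_lt (by have := ZMod.val_lt b; omega)]

/-- Edges of a Hamiltonian cycle: every edge has the form `s(g v, g (v+1))`. -/
lemma ham_edge {n : ℕ} [NeZero n] {H : Finset (Sym2 (ZMod n))} {g : ZMod n ≃ ZMod n}
    (hHeq : H = Finset.image (fun i : ℕ => s(g (i : ZMod n), g ((i : ZMod n) + 1)))
      (Finset.range n)) :
    ∀ e ∈ H, ∃ v : ZMod n, e = s(g v, g (v + 1)) := by
  intro e he
  rw [hHeq, Finset.mem_image] at he
  obtain ⟨i, _, rfl⟩ := he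
  exact ⟨(i : ZMod n), rfl⟩

lemma ham_mem {n : ℕ} [NeZero n] {H : Finset (Sym2 (ZMod n))} {g : ZMod n ≃ ZMod n}
    (hHeq : H = Finset.image (fun i : ℕ => s(g (i : ZMod n), g ((i : ZMod n) + 1)))
      (Finset.range n)) :
    ∀ v : ZMod n, s(g v, g (v + 1)) ∈ H := by
  intro v
  rw [hHeq, Finset.mem_image]
  refine ⟨v.val, Finset.mem_range.mpr (ZMod.val_lt v), ?_⟩
  rw [ZMod.natCast_rightInverse v]

lemma one_ne_zero' {n : ℕ} (hn : 3 ≤ n) : (1 : ZMod n) ≠ 0 := by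
  haveI : Fact (1 < n) := ⟨by omega⟩
  exact one_ne_zero

lemma ham_nondiag {n : ℕ} [NeZero n] (hn : 3 ≤ n) {H : Finset (Sym2 (ZMod n))}
    (hham : IsHamCycle n H) : ∀ e ∈ H, ¬ e.IsDiag := by
  obtain ⟨g, hHeq, _⟩ := hham
  intro e he hd
  obtain ⟨v, rfl⟩ := ham_edge hHeq e he
  rw [Sym2.mk_isDiag_iff] at hd
  have h1 : v = v + 1 := g.injective hd
  exact one_ne_zero' hn (by linear_combination -h1)

lemma ham_deg {n : ℕ} [NeZero n] (hn : 3 ≤ n) {H : Finset (Sym2 (ZMod n))}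
    (hham : IsHamCycle n H) : ∀ v : ZMod n, deg n H v = 2 := by
  classical
  obtain ⟨g, hHeq, hcard⟩ := hham
  set f : ℕ → Sym2 (ZMod n) := fun i => s(g (i : ZMod n), g ((i : ZMod n) + 1)) with hf
  have hinj : Set.InjOn f (Finset.range n) := by
    rw [← Finset.card_image_iff, ← hHeq, hcard, Finset.card_range]
  intro v
  set j : ZMod n := g.symm v with hj
  have hfil : (Finset.range n).filter (fun i => v ∈ f i) = {j.val, (j - 1).val} := by
    ext i
    simp only [Finset.mem_filter, Finset.mem_range, Finset.mem_insert, Finset.mem_singleton,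
      hf, Sym2.mem_iff]
    constructor
    · rintro ⟨hi, h | h⟩
      · left
        have : (i : ZMod n) = j := by rw [hj, h, Equiv.symm_apply_apply]
        rw [← this, ZMod.val_cast_of_lt hi]
      · right
        have h2 : (i : ZMod n) + 1 = j := by rw [hj, h, Equiv.symm_apply_apply]
        have : (i : ZMod n) = j - 1 := by linear_combination h2
        rw [← this, ZMod.val_cast_of_lt hi]
    · rintro (rfl | rfl)
      · refine ⟨ZMod.val_lt j, Or.inl ?_⟩
        rw [ZMod.natCast_rightInverse j, hj, Equiv.apply_symm_apply]
      · refine ⟨ZMod.val_lt _, Or.inr ?_⟩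
        rw [ZMod.natCast_rightInverse (j - 1)]
        rw [sub_add_cancel, hj, Equiv.apply_symm_apply]
  have hne : j.val ≠ (j - 1).val := by
    intro h
    have h2 : j = j - 1 := ZMod.val_injective n h
    have h3 : (1 : ZMod n) = 0 := by linear_combination h2
    exact one_ne_zero' hn h3
  have : deg n H v = ((Finset.range n).filter (fun i => v ∈ f i)).card := by
    unfold deg
    rw [hHeq, Finset.filter_image]
    exact Finset.card_image_of_injOn (hinj.mono (Finset.filter_subset _ _))
  rw [this, hfil, Finset.card_insert_of_notMem (by simpa using hne), Finset.card_singleton]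

lemma not_cross_shared {n : ℕ} [NeZero n] {e f : Sym2 (ZMod n)} (v : ZMod n)
    (hv : v ∈ e) (hw : v ∈ f) : ¬ Cross n e f := by
  rintro ⟨a, b, c, d, rfl, rfl, h1, h2⟩
  obtain ⟨h1a, h1b⟩ := h1
  obtain ⟨h2a, h2b⟩ := h2
  rcases Sym2.mem_iff.mp hv with rfl | rfl <;> rcases Sym2.mem_iff.mp hw with h | h
  · rw [← h, sub_self, ZMod.val_zero] at h1a; exact lt_irrefl _ h1a
  · rw [← h] at h2b; exact lt_irrefl _ h2b
  · rw [← h] at h1b; exact lt_irrefl _ h1b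
  · rw [← h, sub_self, ZMod.val_zero] at h2a; exact lt_irrefl _ h2a

def D4 : Finset (Sym2 (ZMod 4)) := {s(0,2), s(1,3)}
def D5 : Finset (Sym2 (ZMod 5)) := {s(0,2), s(1,3), s(2,4), s(3,0), s(4,1)}
def D6 : Finset (Sym2 (ZMod 6)) :=
  {s(0,2), s(0,3), s(0,4), s(1,3), s(1,4), s(1,5), s(2,4), s(2,5), s(3,5)}

lemma D3_spec : ∀ e : Sym2 (ZMod 3), ¬ IsDiagonal 3 e := by decide
lemma D4_spec : ∀ e : Sym2 (ZMod 4), IsDiagonal 4 e → e ∈ D4 := by decide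
lemma D5_spec : ∀ e : Sym2 (ZMod 5), IsDiagonal 5 e → e ∈ D5 := by decide
lemma D6_spec : ∀ e : Sym2 (ZMod 6), IsDiagonal 6 e → e ∈ D6 := by decide
lemma D4_card : D4.card = 2 := by decide
lemma D5_card : D5.card = 5 := by decide
lemma D6_card : D6.card = 9 := by decide
lemma D6_deg : ∀ v : ZMod 6, deg 6 D6 v = 3 := by decide
lemma partner0 : ∀ w : ZMod 6, IsDiagonal 6 s(0, w) → w = 2 ∨ w = 3 ∨ w = 4 := by decide
lemma partner1 : ∀ w : ZMod 6, IsDiagonal 6 s(1, w) → w = 3 ∨ w = 4 ∨ w = 5 := by decide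
lemma partner5 : ∀ w : ZMod 6, IsDiagonal 6 s(5, w) → w = 1 ∨ w = 2 ∨ w = 3 := by decide
lemma cross02 : ∀ w : ZMod 6, w = 3 ∨ w = 4 ∨ w = 5 → Cross 6 s(0,2) s(1,w) := by decide
lemma cross03 : ∀ w : ZMod 6, w = 4 ∨ w = 5 → Cross 6 s(0,3) s(1,w) := by decide
lemma cross04 : ∀ w : ZMod 6, w = 1 ∨ w = 2 ∨ w = 3 → Cross 6 s(0,4) s(5,w) := by decide
lemma mem03 : (3 : ZMod 6) ∈ s((0:ZMod 6),3) ∧ (3 : ZMod 6) ∈ s((1:ZMod 6),3) ∧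
    ({s((0 : ZMod 6), 3), s((1 : ZMod 6), 3)} : Finset (Sym2 (ZMod 6))).card = 2 := by decide

lemma no_small {n : ℕ} (hn : 3 ≤ n) (h6 : n ≤ 6) (H : Finset (Sym2 (ZMod n)))
    (hham : IsHamCycle n H) (hadm : AdmitsTriangulation n H) : False := by
  classical
  have hnz : NeZero n := ⟨by omega⟩
  obtain ⟨hnb, T, hTcard, hTdiag, hTcross, hTH⟩ := hadm
  obtain ⟨g, hHeq, hHcard⟩ := hham
  have hHdiag : ∀ e ∈ H, IsDiagonal n e :=
    fun e he => ⟨@ham_nondiag n hnz hn H ⟨g, hHeq, hHcard⟩ e he, hnb e he⟩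
  have hUTdiag : ∀ e ∈ H ∪ T, IsDiagonal n e := by
    intro e he
    rcases Finset.mem_union.mp he with h | h
    · exact hHdiag e h
    · exact hTdiag e h
  have hdisj : Disjoint H T := Finset.disjoint_left.mpr (fun {e} heH heT => hTH e heT heH)
  have hUTcard : (H ∪ T).card = n + (n - 3) := by
    rw [Finset.card_union_of_disjoint hdisj, hHcard, hTcard]
  interval_cases n
  · -- n = 3
    have : H ∪ T = ∅ := Finset.eq_empty_of_forall_notMem
      (fun e he => D3_spec e (hUTdiag e he))
    rw [this] at hUTcard
    simp at hUTcard
  · -- n = 4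
    have h1 := Finset.card_le_card (fun e he => D4_spec e (hUTdiag e he))
    rw [hUTcard, D4_card] at h1
    omega
  · -- n = 5
    have h1 := Finset.card_le_card (fun e he => D5_spec e (hUTdiag e he))
    rw [hUTcard, D5_card] at h1
    omega
  -- n = 6
  have hUT : H ∪ T = D6 :=
    Finset.eq_of_subset_of_card_le (fun e he => D6_spec e (hUTdiag e he))
      (by rw [hUTcard, D6_card])
  have hdegsum : ∀ v : ZMod 6, deg 6 H v + deg 6 T v = 3 := by
    intro v
    rw [← D6_deg v, ← hUT]
    unfold deg
    rw [Finset.filter_union, Finset.card_union_of_disjoint (Finset.disjoint_filter_filter hdisj)]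
  have hdegH := @ham_deg 6 hnz (by norm_num) H ⟨g, hHeq, hHcard⟩
  have hdegT : ∀ v : ZMod 6, deg 6 T v = 1 := by
    intro v; have h1 := hdegsum v; rw [hdegH v] at h1; omega
  have hedge : ∀ v : ZMod 6, ∃ w : ZMod 6, s(v, w) ∈ T := by
    intro v
    have h1 : (T.filter (fun e => v ∈ e)).card = 1 := hdegT v
    obtain ⟨e, he⟩ := Finset.card_pos.mp (by omega : 0 < (T.filter (fun e => v ∈ e)).card)
    have h2 := Finset.mem_filter.mp he
    obtain ⟨w, rfl⟩ := Sym2.mem_iff_exists.mp h2.2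
    exact ⟨w, h2.1⟩
  obtain ⟨w0, h0⟩ := hedge 0
  rcases partner0 w0 (hTdiag _ h0) with rfl | rfl | rfl
  · obtain ⟨w1, h1⟩ := hedge 1
    exact hTcross _ h0 _ h1 (cross02 w1 (partner1 w1 (hTdiag _ h1)))
  · obtain ⟨w1, h1⟩ := hedge 1
    rcases partner1 w1 (hTdiag _ h1) with rfl | rfl | rfl
    · -- both s(0,3) and s(1,3) in T
      have hsub2 : ({s((0 : ZMod 6), 3), s((1 : ZMod 6), 3)} : Finset (Sym2 (ZMod 6)))
          ⊆ T.filter (fun e => (3 : ZMod 6) ∈ e) := by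
        intro e he
        simp only [Finset.mem_insert, Finset.mem_singleton] at he
        rcases he with rfl | rfl
        · exact Finset.mem_filter.mpr ⟨h0, mem03.1⟩
        · exact Finset.mem_filter.mpr ⟨h1, mem03.2.1⟩
      have h3 := Finset.card_le_card hsub2
      have h5 : (T.filter (fun e => (3 : ZMod 6) ∈ e)).card = 1 := hdegT 3
      rw [mem03.2.2, h5] at h3
      omega
    · exact hTcross _ h0 _ h1 (cross03 4 (Or.inl rfl))
    · exact hTcross _ h0 _ h1 (cross03 5 (Or.inr rfl))
  · obtain ⟨w1, h1⟩ := hedge 5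
    exact hTcross _ h0 _ h1 (cross04 w1 (partner5 w1 (hTdiag _ h1)))

/-! ### Backward direction: base case `n = 7` -/

def f7 : ZMod 7 → ZMod 7 := fun i =>
  if i = 0 then 0 else if i = 1 then 2 else if i = 2 then 4 else if i = 3 then 1
  else if i = 4 then 6 else if i = 5 then 3 else 5

def H7 : Finset (Sym2 (ZMod 7)) :=
  Finset.image (fun i : ℕ => s(f7 (i : ZMod 7), f7 ((i : ZMod 7) + 1))) (Finset.range 7)

def T7 : Finset (Sym2 (ZMod 7)) := {s(0,3), s(0,4), s(1,3), s(4,6)}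

lemma base7 : ∃ H : Finset (Sym2 (ZMod 7)), IsHamCycle 7 H ∧ AdmitsTriangulation 7 H := by
  refine ⟨H7, ⟨Equiv.ofBijective f7 (by decide), rfl, by decide⟩,
    by decide, T7, by decide, by decide, by decide, by decide⟩

/-! ### Backward direction: induction step -/

/-- The order-embedding of the vertices of the `n`-gon into the `(n+1)`-gon. -/
def emb (n : ℕ) (x : ZMod n) : ZMod (n + 1) := (x.val : ZMod (n + 1))

lemma emb_val {n : ℕ} [NeZero n] (x : ZMod n) : (emb n x).val = x.val :=
  ZMod.val_cast_of_lt (lt_trans (ZMod.val_lt x) (Nat.lt_succ_self n))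

lemma emb_inj {n : ℕ} [NeZero n] : Function.Injective (emb n) := fun x y h =>
  ZMod.val_injective n (by rw [← emb_val x, ← emb_val y, h])

lemma emb_val_lt {n : ℕ} [NeZero n] (x : ZMod n) : (emb n x).val < n := by
  rw [emb_val]; exact ZMod.val_lt x

lemma arc_down {n : ℕ} [NeZero n] {u v w : ZMod n}
    (h : InOpenArc (n+1) (emb n u) (emb n v) (emb n w)) : InOpenArc n u v w := by
  have hu := ZMod.val_lt u; have hv := ZMod.val_lt v; have hw := ZMod.val_lt w
  unfold InOpenArc at h ⊢
  simp only [val_sub, emb_val] at h ⊢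
  split_ifs at h ⊢ <;> omega

lemma cross_down {n : ℕ} [NeZero n] {e f : Sym2 (ZMod n)}
    (h : Cross (n+1) (Sym2.map (emb n) e) (Sym2.map (emb n) f)) : Cross n e f := by
  induction e using Sym2.ind with | _ x y =>
  induction f using Sym2.ind with | _ z w =>
  obtain ⟨a, b, c, d, he, hf, h1, h2⟩ := h
  rw [Sym2.map_pair_eq] at he hf
  rcases Sym2.eq_iff.mp he with ⟨ha, hb⟩ | ⟨ha, hb⟩ <;>
    rcases Sym2.eq_iff.mp hf with ⟨hc, hd⟩ | ⟨hc, hd⟩ <;>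
    subst ha <;> subst hb <;> subst hc <;> subst hd
  · exact ⟨x, y, z, w, rfl, rfl, arc_down h1, arc_down h2⟩
  · exact ⟨x, y, w, z, rfl, Sym2.eq_swap, arc_down h1, arc_down h2⟩
  · exact ⟨y, x, z, w, Sym2.eq_swap, rfl, arc_down h1, arc_down h2⟩
  · exact ⟨y, x, w, z, Sym2.eq_swap, Sym2.eq_swap, arc_down h1, arc_down h2⟩

lemma Mval {n : ℕ} (hn : 3 ≤ n) : (((n - 1 : ℕ)) : ZMod (n+1)).val = n - 1 :=
  ZMod.val_cast_of_lt (by omega)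

lemma Nval (n : ℕ) : (((n : ℕ)) : ZMod (n+1)).val = n :=
  ZMod.val_cast_of_lt (by omega)

/-- No chord with both endpoints among the old vertices can cross the new edge
`{n-1, 0}` of the `(n+1)`-gon (first kind of arc membership). -/
lemma arcs_new_left {n : ℕ} (hn : 3 ≤ n) {c : ZMod (n+1)} (hc : c.val < n) :
    ¬ InOpenArc (n+1) (((n - 1 : ℕ)) : ZMod (n+1)) 0 c := by
  rintro ⟨h1, h2⟩
  rw [val_sub] at h1 h2
  rw [val_sub] at h2
  simp only [Mval hn, ZMod.val_zero] at h1 h2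
  split_ifs at h1 h2 <;> omega

lemma arcs_new {n : ℕ} (hn : 3 ≤ n) {a b : ZMod (n+1)} (ha : a.val < n) (hb : b.val < n) :
    ¬ (InOpenArc (n+1) a b (((n - 1 : ℕ)) : ZMod (n+1)) ∧ InOpenArc (n+1) b a 0) ∧
    ¬ (InOpenArc (n+1) a b 0 ∧ InOpenArc (n+1) b a (((n - 1 : ℕ)) : ZMod (n+1))) := by
  unfold InOpenArc
  simp only [val_sub, Mval hn, ZMod.val_zero]
  constructor <;> rintro ⟨⟨p1, p2⟩, q1, q2⟩ <;> split_ifs at p1 p2 q1 q2 <;> omega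

/-- The permutation of the `(n+1)`-gon obtained from `g` (rotated by `t`) by inserting the
new vertex `n` at the end. -/
def gstep (n : ℕ) (g : ZMod n ≃ ZMod n) (t : ZMod n) (x : ZMod (n+1)) : ZMod (n+1) :=
  if x.val < n then emb n (g ((x.val : ZMod n) + t)) else ((n : ℕ) : ZMod (n+1))

lemma gstep_lt {n : ℕ} [NeZero n] (g : ZMod n ≃ ZMod n) (t : ZMod n) {i : ℕ} (hi : i < n) :
    gstep n g t ((i : ℕ) : ZMod (n+1)) = emb n (g ((i : ZMod n) + t)) := by
  unfold gstep
  rw [ZMod.val_cast_of_lt (by omega : i < n + 1), if_pos hi]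

lemma gstep_last {n : ℕ} (g : ZMod n ≃ ZMod n) (t : ZMod n) :
    gstep n g t ((n : ℕ) : ZMod (n+1)) = ((n : ℕ) : ZMod (n+1)) := by
  unfold gstep
  rw [Nval n, if_neg (lt_irrefl n)]

lemma gstep_inj {n : ℕ} [NeZero n] (g : ZMod n ≃ ZMod n) (t : ZMod n) :
    Function.Injective (gstep n g t) := by
  intro x y h
  unfold gstep at h
  have hx' := ZMod.val_lt x; have hy' := ZMod.val_lt y
  by_cases hx : x.val < n <;> by_cases hy : y.val < n
  · rw [if_pos hx, if_pos hy] at h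
    have h1 := g.injective (emb_inj h)
    have h2 : ((x.val : ℕ) : ZMod n) = ((y.val : ℕ) : ZMod n) := by
      have := add_right_cancel h1; exact this
    have h3 : x.val = y.val := by
      rw [← ZMod.val_cast_of_lt hx, ← ZMod.val_cast_of_lt hy, h2]
    exact ZMod.val_injective _ h3
  · rw [if_pos hx, if_neg hy] at h
    have h1 : (((n : ℕ)) : ZMod (n+1)).val < n := by rw [← h, emb_val]; exact ZMod.val_lt _
    rw [Nval n] at h1; omega
  · rw [if_neg hx, if_pos hy] at h
    have h1 : (((n : ℕ)) : ZMod (n+1)).val < n := by rw [h, emb_val]; exact ZMod.val_lt _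
    rw [Nval n] at h1; omega
  · rw [if_neg hx, if_neg hy] at h
    exact ZMod.val_injective _ (by omega)

lemma neg_one_cast {n : ℕ} (hn : 1 ≤ n) : (((n - 1 : ℕ)) : ZMod n) = -1 := by
  rw [Nat.cast_sub hn, Nat.cast_one, ZMod.natCast_self]
  ring

lemma emb_succ {n : ℕ} [NeZero n] {x y : ZMod n} (h : emb n y = emb n x + 1) : y = x + 1 := by
  have hx := ZMod.val_lt x; have hy := ZMod.val_lt y
  have h1 : emb n x + 1 = ((x.val + 1 : ℕ) : ZMod (n+1)) := by unfold emb; push_cast; ring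
  have h2 : y.val = x.val + 1 := by
    have h3 := congrArg ZMod.val (h.trans h1)
    rwa [emb_val, ZMod.val_cast_of_lt (by omega)] at h3
  calc y = ((y.val : ℕ) : ZMod n) := (ZMod.natCast_rightInverse y).symm
    _ = ((x.val + 1 : ℕ) : ZMod n) := by rw [h2]
    _ = x + 1 := by rw [Nat.cast_add, Nat.cast_one, ZMod.natCast_rightInverse x]

/-- The Hamiltonian cycle of the `(n+1)`-gon obtained by inserting the new vertex `n`
into the cycle given by `g`, between the vertices `g (t-1)` and `g t`. -/
def Hstep (n : ℕ) (g : ZMod n ≃ ZMod n) (t : ZMod n) : Finset (Sym2 (ZMod (n+1))) :=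
  Finset.image (fun i : ℕ => s(gstep n g t (i : ZMod (n+1)), gstep n g t ((i : ZMod (n+1)) + 1)))
    (Finset.range (n+1))

lemma addcast (n : ℕ) (i : ℕ) : ((i : ZMod (n+1))) + 1 = ((i + 1 : ℕ) : ZMod (n+1)) := by
  push_cast; ring

lemma Hstep_mem {n : ℕ} [NeZero n] (hn : 7 ≤ n) (g : ZMod n ≃ ZMod n) (t : ZMod n) :
    ∀ e ∈ Hstep n g t, (∃ v : ZMod n, e = Sym2.map (emb n) s(g v, g (v + 1))) ∨
      e = s(emb n (g (t - 1)), ((n : ℕ) : ZMod (n+1))) ∨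
      e = s(((n : ℕ) : ZMod (n+1)), emb n (g t)) := by
  intro e he
  obtain ⟨i, hi, rfl⟩ := Finset.mem_image.mp he
  rw [Finset.mem_range] at hi
  rcases (by omega : i + 1 < n ∨ i = n - 1 ∨ i = n) with h | h | h
  · left
    refine ⟨(i : ZMod n) + t, ?_⟩
    rw [Sym2.map_pair_eq, gstep_lt g t (by omega : i < n), addcast,
      gstep_lt g t (by omega : i + 1 < n)]
    have h2 : ((i + 1 : ℕ) : ZMod n) + t = ((i : ZMod n) + t) + 1 := by push_cast; ring
    rw [h2]
  · right; left
    subst h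
    rw [gstep_lt g t (by omega : n - 1 < n), addcast, (by omega : n - 1 + 1 = n), gstep_last]
    have h2 : ((n - 1 : ℕ) : ZMod n) + t = t - 1 := by rw [neg_one_cast (by omega)]; ring
    rw [h2]
  · right; right
    rw [h]
    have h0 : ((n + 1 : ℕ) : ZMod (n+1)) = ((0 : ℕ) : ZMod (n+1)) := by
      rw [ZMod.natCast_self]; simp
    rw [gstep_last, addcast, h0, gstep_lt g t (by omega : 0 < n)]
    have h2 : ((0 : ℕ) : ZMod n) + t = t := by push_cast; ring
    rw [h2]

lemma Hstep_card {n : ℕ} [NeZero n] (hn : 7 ≤ n) (g : ZMod n ≃ ZMod n) (t : ZMod n) :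
    (Hstep n g t).card = n + 1 := by
  rw [Hstep, Finset.card_image_of_injOn, Finset.card_range]
  intro i hi j hj hij
  simp only [Finset.mem_coe, Finset.mem_range] at hi hj
  rcases Sym2.eq_iff.mp hij with ⟨ha, hb⟩ | ⟨ha, hb⟩
  · have h1 : (i : ZMod (n+1)) = (j : ZMod (n+1)) := gstep_inj g t ha
    have h2 := congrArg ZMod.val h1
    rwa [ZMod.val_cast_of_lt hi, ZMod.val_cast_of_lt hj] at h2
  · have u : (i : ZMod (n+1)) = (j : ZMod (n+1)) + 1 := gstep_inj g t ha
    have v : (i : ZMod (n+1)) + 1 = (j : ZMod (n+1)) := gstep_inj g t hb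
    have h2 : ((2 : ℕ) : ZMod (n+1)) = 0 := by push_cast; linear_combination v - u
    have h3 := congrArg ZMod.val h2
    rw [ZMod.val_cast_of_lt (by omega : 2 < n + 1), ZMod.val_zero] at h3
    omega

lemma Hstep_isham {n : ℕ} [NeZero n] (hn : 7 ≤ n) (g : ZMod n ≃ ZMod n) (t : ZMod n) :
    IsHamCycle (n+1) (Hstep n g t) := by
  have hbij : Function.Bijective (gstep n g t) :=
    Finite.injective_iff_bijective.mp (gstep_inj g t)
  exact ⟨Equiv.ofBijective _ hbij, rfl, Hstep_card hn g t⟩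

lemma step {n : ℕ} (hn : 7 ≤ n) (H : Finset (Sym2 (ZMod n)))
    (hham : IsHamCycle n H) (hadm : AdmitsTriangulation n H) :
    ∃ H' : Finset (Sym2 (ZMod (n+1))), IsHamCycle (n+1) H' ∧ AdmitsTriangulation (n+1) H' := by
  classical
  haveI hnz : NeZero n := ⟨by omega⟩
  obtain ⟨hnb, T, hTcard, hTdiag, hTcross, hTH⟩ := hadm
  obtain ⟨g, hHeq, hHcard⟩ := hham
  -- choice of the subdivided edge
  obtain ⟨t, ht⟩ : ∃ t : ZMod n, t ∉ ({g.symm 0, g.symm 0 + 1, g.symm (((n-1:ℕ)) : ZMod n),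
      g.symm (((n-1:ℕ)) : ZMod n) + 1} : Finset (ZMod n)) := by
    by_contra hcon
    push_neg at hcon
    have h1 : (Finset.univ : Finset (ZMod n)) ⊆ _ := fun t _ => hcon t
    have h2 := (Finset.card_le_card h1).trans ((Finset.card_insert_le _ _).trans
      (Nat.succ_le_succ ((Finset.card_insert_le _ _).trans (Nat.succ_le_succ
      ((Finset.card_insert_le _ _).trans (Nat.succ_le_succ
        (le_of_eq (Finset.card_singleton _))))))))
    rw [Finset.card_univ, ZMod.card] at h2
    omega
  simp only [Finset.mem_insert, Finset.mem_singleton] at ht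
  push_neg at ht
  obtain ⟨ht1, ht2, ht3, ht4⟩ := ht
  have hgt0 : g t ≠ 0 := fun h => ht1 (by rw [← h, Equiv.symm_apply_apply])
  have hgtM : g t ≠ (((n-1:ℕ)) : ZMod n) := fun h => ht3 (by rw [← h, Equiv.symm_apply_apply])
  have hgt0' : g (t - 1) ≠ 0 := fun h => ht2 (by
    have h1 : t - 1 = g.symm 0 := by rw [← h, Equiv.symm_apply_apply]
    linear_combination h1)
  have hgtM' : g (t - 1) ≠ (((n-1:ℕ)) : ZMod n) := fun h => ht4 (by
    have h1 : t - 1 = g.symm (((n-1:ℕ)) : ZMod n) := by rw [← h, Equiv.symm_apply_apply]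
    linear_combination h1)
  -- basic facts
  have hM10 : (((n-1:ℕ)) : ZMod n) + 1 = 0 := by rw [neg_one_cast (by omega : 1 ≤ n)]; ring
  have hM1emb : emb n (((n-1:ℕ)) : ZMod n) = (((n-1:ℕ)) : ZMod (n+1)) := by
    unfold emb; rw [ZMod.val_cast_of_lt (by omega : n - 1 < n)]
  have h0emb : emb n (0 : ZMod n) = 0 := by
    unfold emb; rw [ZMod.val_zero]; simp
  have hMO : s((((n-1:ℕ)) : ZMod (n+1)), (0 : ZMod (n+1))) =
      Sym2.map (emb n) s((((n-1:ℕ)) : ZMod n), 0) := by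
    rw [Sym2.map_pair_eq, hM1emb, h0emb]
  have hsuccN : ∀ w : ZMod n, ((n : ℕ) : ZMod (n+1)) = emb n w + 1 →
      w = (((n-1:ℕ)) : ZMod n) := by
    intro w h
    have h1 : emb n w + 1 = ((w.val + 1 : ℕ) : ZMod (n+1)) := by unfold emb; push_cast; ring
    have h2 := congrArg ZMod.val (h.trans h1)
    have hw := ZMod.val_lt w
    rw [Nval n, ZMod.val_cast_of_lt (by omega : w.val + 1 < n + 1)] at h2
    apply ZMod.val_injective
    rw [ZMod.val_cast_of_lt (by omega : n - 1 < n)]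
    omega
  have hsucc0 : ∀ w : ZMod n, emb n w = ((n : ℕ) : ZMod (n+1)) + 1 → w = 0 := by
    intro w h
    have h1 : ((n : ℕ) : ZMod (n+1)) + 1 = 0 := by
      rw [show ((n : ℕ) : ZMod (n+1)) + 1 = ((n + 1 : ℕ) : ZMod (n+1)) from by push_cast; ring,
        ZMod.natCast_self]
    rw [h1] at h
    have h2 := congrArg ZMod.val h
    rw [emb_val, ZMod.val_zero] at h2
    apply ZMod.val_injective
    rw [ZMod.val_zero]; exact h2
  have hbound : ∀ e₀ : Sym2 (ZMod n), ¬ IsBoundary n e₀ →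
      ¬ IsBoundary (n+1) (Sym2.map (emb n) e₀) := by
    intro e₀
    induction e₀ using Sym2.ind with
    | _ x y =>
      intro hb hB
      obtain ⟨i, hi⟩ := hB
      rw [Sym2.map_pair_eq] at hi
      rcases Sym2.eq_iff.mp hi with ⟨h1, h2⟩ | ⟨h1, h2⟩
      · have h3 : emb n y = emb n x + 1 := by rw [h1, h2]
        exact hb ⟨x, by rw [emb_succ h3]⟩
      · have h3 : emb n x = emb n y + 1 := by rw [h2, h1]
        exact hb ⟨y, by rw [emb_succ h3]; exact Sym2.eq_swap⟩
  have hvalmem : ∀ (e₀ : Sym2 (ZMod n)) (z : ZMod (n+1)), z ∈ Sym2.map (emb n) e₀ →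
      z.val < n := by
    intro e₀ z hz
    obtain ⟨w, _, rfl⟩ := Sym2.mem_map.mp hz
    exact emb_val_lt w
  -- the new triangulation
  set T' : Finset (Sym2 (ZMod (n+1))) :=
    (T.image (Sym2.map (emb n))) ∪ {s((((n-1:ℕ)) : ZMod (n+1)), 0)} with hT'def
  have hnotinT : s((((n-1:ℕ)) : ZMod (n+1)), (0 : ZMod (n+1))) ∉ T.image (Sym2.map (emb n)) := by
    intro hmem
    obtain ⟨e₀, he₀, heq⟩ := Finset.mem_image.mp hmem
    rw [hMO] at heq
    have h1 : e₀ = s((((n-1:ℕ)) : ZMod n), 0) := Sym2.map.injective emb_inj heq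
    exact (hTdiag e₀ he₀).2 ⟨(((n-1:ℕ)) : ZMod n), by rw [h1, hM10]⟩
  have hT'card : T'.card = (n + 1) - 3 := by
    rw [hT'def, Finset.union_comm, ← Finset.insert_eq,
      Finset.card_insert_of_notMem hnotinT,
      Finset.card_image_of_injective _ (Sym2.map.injective emb_inj), hTcard]
    omega
  -- non-crossing
  have hT'cross : ∀ e ∈ T', ∀ f ∈ T', ¬ Cross (n+1) e f := by
    intro e he f hf
    rw [hT'def, Finset.mem_union, Finset.mem_singleton] at he hf
    rcases he with he | he <;> rcases hf with hf | hf
    · obtain ⟨e₀, he₀, rfl⟩ := Finset.mem_image.mp he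
      obtain ⟨f₀, hf₀, rfl⟩ := Finset.mem_image.mp hf
      intro hc
      exact hTcross e₀ he₀ f₀ hf₀ (cross_down hc)
    · obtain ⟨e₀, he₀, rfl⟩ := Finset.mem_image.mp he
      subst hf
      rintro ⟨a, b, c, d, hee, hff, h1, h2⟩
      have ha : a.val < n := hvalmem e₀ a (by rw [hee]; exact Sym2.mem_iff.mpr (Or.inl rfl))
      have hb : b.val < n := hvalmem e₀ b (by rw [hee]; exact Sym2.mem_iff.mpr (Or.inr rfl))
      rcases Sym2.eq_iff.mp hff with ⟨hc, hd⟩ | ⟨hc, hd⟩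
      · rw [← hc] at h1; rw [← hd] at h2
        exact (arcs_new (by omega : 3 ≤ n) ha hb).1 ⟨h1, h2⟩
      · rw [← hd] at h1; rw [← hc] at h2
        exact (arcs_new (by omega : 3 ≤ n) ha hb).2 ⟨h1, h2⟩
    · obtain ⟨f₀, hf₀, rfl⟩ := Finset.mem_image.mp hf
      subst he
      rintro ⟨a, b, c, d, hee, hff, h1, h2⟩
      have hc : c.val < n := hvalmem f₀ c (by rw [hff]; exact Sym2.mem_iff.mpr (Or.inl rfl))
      have hd : d.val < n := hvalmem f₀ d (by rw [hff]; exact Sym2.mem_iff.mpr (Or.inr rfl))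
      rcases Sym2.eq_iff.mp hee with ⟨h3, h4⟩ | ⟨h3, h4⟩
      · rw [← h3, ← h4] at h1
        exact arcs_new_left (by omega : 3 ≤ n) hc h1
      · rw [← h3, ← h4] at h2
        exact arcs_new_left (by omega : 3 ≤ n) hd h2
    · subst he; subst hf
      exact not_cross_shared (((n-1:ℕ)) : ZMod (n+1)) (Sym2.mem_iff.mpr (Or.inl rfl))
        (Sym2.mem_iff.mpr (Or.inl rfl))
  -- diagonals
  have hT'diag : ∀ e ∈ T', IsDiagonal (n+1) e := by
    intro e he
    rw [hT'def, Finset.mem_union, Finset.mem_singleton] at he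
    rcases he with he | he
    · obtain ⟨e₀, he₀, rfl⟩ := Finset.mem_image.mp he
      obtain ⟨hd1, hd2⟩ := hTdiag e₀ he₀
      refine ⟨?_, hbound e₀ hd2⟩
      intro hdiag
      apply hd1
      obtain ⟨x, y⟩ := e₀
      rw [Sym2.map_pair_eq, Sym2.mk_isDiag_iff] at hdiag
      rw [Sym2.mk_isDiag_iff]
      exact emb_inj hdiag
    · subst he
      constructor
      · rw [Sym2.mk_isDiag_iff]
        intro h
        have h1 := congrArg ZMod.val h
        rw [Mval (by omega : 3 ≤ n), ZMod.val_zero] at h1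
        omega
      · rintro ⟨i, hi⟩
        rcases Sym2.eq_iff.mp hi with ⟨h1, h2⟩ | ⟨h1, h2⟩
        · have h3 : (0 : ZMod (n+1)) = (((n-1:ℕ)) : ZMod (n+1)) + 1 := by rw [h1, h2]
          have h4 : (((n-1:ℕ)) : ZMod (n+1)) + 1 = ((n : ℕ) : ZMod (n+1)) := by
            rw [show (n : ℕ) = (n-1) + 1 from by omega]; push_cast; ring
          have h5 := congrArg ZMod.val (h3.trans h4)
          rw [ZMod.val_zero, Nval n] at h5
          omega
        · have h3 : (((n-1:ℕ)) : ZMod (n+1)) = (0 : ZMod (n+1)) + 1 := by rw [h2, h1]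
          have h5 := congrArg ZMod.val h3
          rw [zero_add, Mval (by omega : 3 ≤ n)] at h5
          have h6 : (1 : ZMod (n+1)).val = 1 := by
            rw [show (1 : ZMod (n+1)) = ((1:ℕ) : ZMod (n+1)) from by push_cast; rfl,
              ZMod.val_cast_of_lt (by omega : 1 < n+1)]
          rw [h6] at h5
          omega
  -- H' basic facts
  have hmemH' := Hstep_mem hn g t
  have hH'nb : ∀ e ∈ Hstep n g t, ¬ IsBoundary (n+1) e := by
    intro e he
    rcases hmemH' e he with ⟨v, rfl⟩ | rfl | rfl
    · exact hbound _ (hnb _ (ham_mem hHeq v))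
    · rintro ⟨i, hi⟩
      rcases Sym2.eq_iff.mp hi with ⟨h1, h2⟩ | ⟨h1, h2⟩
      · exact hgtM' (hsuccN _ (by rw [h2, h1]))
      · exact hgt0' (hsucc0 _ (by rw [h1, h2]))
    · rintro ⟨i, hi⟩
      rcases Sym2.eq_iff.mp hi with ⟨h1, h2⟩ | ⟨h1, h2⟩
      · exact hgt0 (hsucc0 _ (by rw [h2, h1]))
      · exact hgtM (hsuccN _ (by rw [h1, h2]))
  -- disjointness
  have hT'H' : ∀ e ∈ T', e ∉ Hstep n g t := by
    intro e heT' heH'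
    rw [hT'def, Finset.mem_union, Finset.mem_singleton] at heT'
    rcases heT' with he | he
    · obtain ⟨e₀, he₀, rfl⟩ := Finset.mem_image.mp he
      rcases hmemH' _ heH' with ⟨v, hv⟩ | hv | hv
      · have h1 : e₀ = s(g v, g (v+1)) := Sym2.map.injective emb_inj hv
        exact hTH e₀ he₀ (by rw [h1]; exact ham_mem hHeq v)
      · have h2 : ((n : ℕ) : ZMod (n+1)) ∈ Sym2.map (emb n) e₀ := by
          rw [hv]; exact Sym2.mem_iff.mpr (Or.inr rfl)
        have h3 := hvalmem e₀ _ h2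
        rw [Nval n] at h3
        omega
      · have h2 : ((n : ℕ) : ZMod (n+1)) ∈ Sym2.map (emb n) e₀ := by
          rw [hv]; exact Sym2.mem_iff.mpr (Or.inl rfl)
        have h3 := hvalmem e₀ _ h2
        rw [Nval n] at h3
        omega
    · subst he
      rcases hmemH' _ heH' with ⟨v, hv⟩ | hv | hv
      · rw [hMO] at hv
        have h1 : s((((n-1:ℕ)) : ZMod n), (0 : ZMod n)) = s(g v, g (v+1)) :=
          Sym2.map.injective emb_inj hv
        apply hnb _ (ham_mem hHeq v)
        exact ⟨(((n-1:ℕ)) : ZMod n), by rw [← h1, hM10]⟩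
      · rcases Sym2.eq_iff.mp hv with ⟨h1, h2⟩ | ⟨h1, h2⟩
        · have h3 := congrArg ZMod.val h2
          rw [ZMod.val_zero, Nval n] at h3
          omega
        · have h3 := congrArg ZMod.val h1
          rw [Mval (by omega : 3 ≤ n), Nval n] at h3
          omega
      · rcases Sym2.eq_iff.mp hv with ⟨h1, h2⟩ | ⟨h1, h2⟩
        · have h3 := congrArg ZMod.val h1
          rw [Mval (by omega : 3 ≤ n), Nval n] at h3
          omega
        · have h3 := congrArg ZMod.val h2
          rw [ZMod.val_zero, Nval n] at h3
          omega
  exact ⟨Hstep n g t, Hstep_isham hn g t, hH'nb, T', hT'card, hT'diag, hT'cross, hT'H'⟩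

lemma exists_good_s8 : ∀ n : ℕ, 7 ≤ n → ∃ H : Finset (Sym2 (ZMod n)),
    IsHamCycle n H ∧ AdmitsTriangulation n H := by
  intro n hn
  induction n, hn using Nat.le_induction with
  | base => exact base7
  | succ m hm ih =>
    obtain ⟨H, h1, h2⟩ := ih
    exact step hm H h1 h2

/-- For `n ≥ 3`, there is a Hamiltonian cycle `H` of the convex `K_n` such that
`K_n - H` admits a triangulation iff `n ≥ 7`. -/
theorem stmt8 (n : ℕ) (hn : 3 ≤ n) :
    (∃ H : Finset (Sym2 (ZMod n)), IsHamCycle n H ∧ AdmitsTriangulation n H) ↔ 7 ≤ n := by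
  constructor
  · rintro ⟨H, h1, h2⟩
    by_contra h
    push_neg at h
    exact no_small hn (by omega) H h1 h2
  · exact exists_good_s8 n

end ConvexTri
end

section
/- Let n ≥ 5 and 1 ≤ k < n/2. Then the generalized Petersen graph P(n, k) is potentially triangulable in the convex complete graph K_{2n}. -/
/-!
Number the vertices of `K_{2n}` by `ZMod (2 * n)`. The `n` ears `(2j, 2j+1, 2j+2)` together with
the fan from `0` over the even vertices triangulate the `2n`-gon, and a chord avoids this
triangulation as soon as it is not a boundary edge and either has an odd endpoint or joins two
nonzero even vertices at distance more than `2`.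

For `k ≥ 2` put `b_i` at `2i` and `a_i` at `2i + c` for a suitable odd `c`, then exchange `a_0`
and `b_0`: the inner edges become even chords of length `2k` avoiding `0`, and every other edge has
an odd endpoint. For `k = 1` the shift by `5` alternates between `a_i` and `b_i` with the parity
of `i`, which gives every edge an odd endpoint when `n` is even; for odd `n` one more exchange
repairs the single place where the alternation breaks. The few small cases are settled by
explicit placements, and `P(5, 1)` by a different triangulation.
-/

namespace ConvexTri

/-- The generalized Petersen graph `P(n, k)`, with outer vertices `.inl i = a_i` and inner
vertices `.inr i = b_i`. -/
def petersen (n k : ℕ) : SimpleGraph (ZMod n ⊕ ZMod n) :=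
  SimpleGraph.fromRel fun x y =>
    (∃ i : ZMod n, x = Sum.inl i ∧ y = Sum.inl (i + 1)) ∨
    (∃ i : ZMod n, x = Sum.inr i ∧ y = Sum.inr (i + (k : ZMod n))) ∨
    (∃ i : ZMod n, x = Sum.inl i ∧ y = Sum.inr i)


open Finset Function

section ZModLemmas

variable {n : ℕ}

lemma ZMod.intCast_ne_intCast {a b : ℤ} (hab : a ≠ b) (hlo : -(n : ℤ) < a - b)
    (hhi : a - b < n) : (a : ZMod n) ≠ b := by
  rw [Ne, ZMod.intCast_eq_intCast_iff_dvd_sub]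
  intro h
  have := Int.eq_zero_of_abs_lt_dvd h (abs_lt.mpr ⟨by omega, by omega⟩)
  omega

lemma ZMod.one_ne_zero_of_two_le (hn : 2 ≤ n) : (1 : ZMod n) ≠ 0 := by
  exact_mod_cast ZMod.intCast_ne_intCast (a := 1) (b := 0) one_ne_zero
    (by omega) (by omega)

lemma ZMod.val_sub_eq_ite [NeZero n] (x y : ZMod n) :
    (x - y).val = if y.val ≤ x.val then x.val - y.val else x.val + n - y.val := by
  split_ifs with h
  · exact ZMod.val_sub h
  · rw [sub_eq_add_neg, ZMod.val_add, ZMod.neg_val, if_neg (by rintro rfl; simp at h)]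
    have := ZMod.val_lt y
    rw [Nat.mod_eq_of_lt (by omega)]
    omega

lemma ZMod.val_add_one_eq_ite [NeZero n] (i : ZMod n) :
    (i + 1).val = if i.val + 1 = n then 0 else i.val + 1 := by
  have hlt := ZMod.val_lt i
  rw [ZMod.val_add, ZMod.val_one_eq_one_mod]
  rcases Nat.lt_or_ge 1 n with hn | hn
  · rw [Nat.mod_eq_of_lt hn]
    split_ifs with h
    · rw [h, Nat.mod_self]
    · exact Nat.mod_eq_of_lt (by omega)
  · obtain rfl : n = 1 := by have := NeZero.pos n; omega
    simp only [Nat.mod_one]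
    rw [if_pos (by omega)]

lemma ZMod.even_val_add_one_iff [NeZero n] {i : ZMod n} (h : Even n ∨ i + 1 ≠ 0) :
    Even (i + 1).val ↔ ¬ Even i.val := by
  have hval := ZMod.val_add_one_eq_ite i
  split_ifs at hval with hi
  · have hn : Even n := h.resolve_right fun h' => h' ((ZMod.val_eq_zero _).mp hval)
    rw [hval, ← Nat.even_add_one, hi]
    simpa using hn
  · rw [hval, Nat.even_add_one]

lemma ZMod.even_val_neg_one (ho : Odd n) : Even (-1 : ZMod n).val := by
  obtain ⟨m, rfl⟩ : ∃ m, n = m + 1 := ⟨n - 1, by have := ho.pos; omega⟩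
  rw [ZMod.val_neg_one]
  simpa [Nat.even_add_one] using Nat.not_even_iff_odd.mpr ho

end ZModLemmas

section Chords

variable {N : ℕ}

instance (a b x : ZMod N) : Decidable (InOpenArc N a b x) :=
  inferInstanceAs (Decidable (_ ∧ _))

instance [NeZero N] (e : Sym2 (ZMod N)) : Decidable (IsBoundary N e) :=
  inferInstanceAs (Decidable (∃ _, _))

instance [NeZero N] (e : Sym2 (ZMod N)) : Decidable (IsDiagonal N e) :=
  inferInstanceAs (Decidable (_ ∧ _))

lemma cross_mk_iff (a b c d : ZMod N) :
    Cross N s(a, b) s(c, d) ↔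
      InOpenArc N a b c ∧ InOpenArc N b a d ∨ InOpenArc N a b d ∧ InOpenArc N b a c := by
  constructor
  · rintro ⟨a', b', c', d', he, hf, h⟩
    rcases Sym2.eq_iff.mp he with ⟨rfl, rfl⟩ | ⟨rfl, rfl⟩ <;>
      rcases Sym2.eq_iff.mp hf with ⟨rfl, rfl⟩ | ⟨rfl, rfl⟩ <;> tauto
  · rintro (h | h)
    · exact ⟨a, b, c, d, rfl, rfl, h⟩
    · exact ⟨a, b, d, c, rfl, Sym2.eq_swap, h⟩

lemma Cross.notMem_of_mem {e f : Sym2 (ZMod N)} (h : Cross N e f) {x : ZMod N} (hx : x ∈ e) :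
    x ∉ f := by
  obtain ⟨a, b, c, d, rfl, rfl, ⟨hc₁, hc₂⟩, ⟨hd₁, hd₂⟩⟩ := h
  have hca : c ≠ a := by rintro rfl; simp at hc₁
  have hcb : c ≠ b := by rintro rfl; exact hc₂.false
  have hdb : d ≠ b := by rintro rfl; simp at hd₁
  have hda : d ≠ a := by rintro rfl; exact hd₂.false
  rcases Sym2.mem_iff.mp hx with rfl | rfl <;> simp_all [eq_comm]

lemma Cross.symm [NeZero N] {e f : Sym2 (ZMod N)} (h : Cross N e f) : Cross N f e := by
  obtain ⟨a, b, c, d, rfl, rfl, ⟨hc₁, hc₂⟩, ⟨hd₁, hd₂⟩⟩ := h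
  -- measure every point by its distance `(x - a).val` from `a`
  have rel : ∀ x y : ZMod N, (x - y).val = if (y - a).val ≤ (x - a).val
      then (x - a).val - (y - a).val else (x - a).val + N - (y - a).val := fun x y => by
    rw [← ZMod.val_sub_eq_ite, sub_sub_sub_cancel_right]
  have hb := ZMod.val_lt (b - a)
  have hc := ZMod.val_lt (c - a)
  have hd := ZMod.val_lt (d - a)
  refine ⟨c, d, b, a, rfl, Sym2.eq_swap, ⟨?_, ?_⟩, ⟨?_, ?_⟩⟩ <;>
    simp only [rel d b, rel a b, rel b c, rel d c, rel a d, rel c d, sub_self,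
      ZMod.val_zero] at hd₁ hd₂ ⊢ <;>
    split_ifs at * <;> omega

lemma Cross.add_one_mem (hN : 2 < N) {u : ZMod N} {g : Sym2 (ZMod N)}
    (h : Cross N s(u, u + 2) g) : u + 1 ∈ g := by
  have : NeZero N := ⟨by omega⟩
  have hmid : ∀ x : ZMod N, 0 < (x - u).val → (x - u).val < (u + 2 - u).val → x = u + 1 := by
    intro x hx₁ hx₂
    rw [add_sub_cancel_left, ← Nat.cast_ofNat, ZMod.val_natCast_of_lt hN] at hx₂
    have h1 : (x - u).val = (1 : ZMod N).val := by
      rw [ZMod.val_one_eq_one_mod, Nat.mod_eq_of_lt (by omega)]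
      omega
    rw [← sub_eq_iff_eq_add', ZMod.val_injective N h1]
  obtain ⟨a, b, c, d, he, rfl, hc, hd⟩ := h
  rcases Sym2.eq_iff.mp he with ⟨rfl, rfl⟩ | ⟨rfl, rfl⟩
  · simp [hmid c hc.1 hc.2]
  · simp [hmid d hd.1 hd.2]

end Chords

def IsTriangulation (N : ℕ) (T : Finset (Sym2 (ZMod N))) : Prop :=
  T.card = N - 3 ∧ (∀ e ∈ T, IsDiagonal N e) ∧ ∀ e ∈ T, ∀ f ∈ T, ¬ Cross N e f

theorem potentiallyTriangulable_of_isTriangulation {V : Type*} [Fintype V] {G : SimpleGraph V}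
    {N : ℕ} {f : V → ZMod N} (hf : Injective f) {T : Finset (Sym2 (ZMod N))}
    (hT : IsTriangulation N T)
    (hG : ∀ x y, G.Adj x y → ¬ IsBoundary N s(f x, f y) ∧ s(f x, f y) ∉ T) :
    PotentiallyTriangulable G N := by
  classical
  have mem_image : ∀ e ∈ G.edgeFinset.image (Sym2.map f),
      ∃ x y, G.Adj x y ∧ e = s(f x, f y) := by
    intro e he
    obtain ⟨⟨x, y⟩, hxy, rfl⟩ := Finset.mem_image.mp he
    exact ⟨x, y, SimpleGraph.mem_edgeFinset.mp hxy, rfl⟩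
  refine ⟨f, hf, G.edgeFinset.image (Sym2.map f), by simp, ?_, T, hT.1, hT.2.1, hT.2.2, ?_⟩
  · intro e he
    obtain ⟨x, y, hxy, rfl⟩ := mem_image e he
    exact (hG x y hxy).1
  · intro e heT heG
    obtain ⟨x, y, hxy, rfl⟩ := mem_image e heG
    exact (hG x y hxy).2 heT

section EarFan

variable {n : ℕ}

def parity (n : ℕ) : ZMod (2 * n) →+* ZMod 2 := ZMod.castHom (dvd_mul_right 2 n) (ZMod 2)

def double (n : ℕ) : ZMod n →+ ZMod (2 * n) :=
  ZMod.lift n ⟨(AddMonoidHom.mulLeft 2).comp (Int.castAddHom _), by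
    have h := ZMod.natCast_self (2 * n)
    rw [Nat.cast_mul, Nat.cast_ofNat] at h
    simpa using h⟩

lemma double_intCast (x : ℤ) : double n x = 2 * x :=
  ZMod.lift_coe _ _ x

lemma double_one : double n 1 = 2 := by
  simpa using double_intCast (n := n) 1

lemma parity_double (i : ZMod n) : parity n (double n i) = 0 := by
  rw [← ZMod.intCast_zmod_cast i, double_intCast, map_mul, map_ofNat]
  exact zero_mul _

lemma double_injective [NeZero n] : Injective (double n) := by
  refine (injective_iff_map_eq_zero (double n)).mpr fun i hi => ?_
  rw [← ZMod.natCast_zmod_val i, ← Int.cast_natCast, double_intCast, Int.cast_natCast] at hi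
  have hdvd : 2 * n ∣ 2 * i.val := by
    rw [← ZMod.natCast_eq_zero_iff]
    push_cast
    exact hi
  rw [← ZMod.val_eq_zero]
  have := Nat.eq_zero_of_dvd_of_lt hdvd (by have := ZMod.val_lt i; omega)
  omega

lemma parity_add_one (u : ZMod (2 * n)) : parity n (u + 1) = parity n u + 1 := by
  rw [map_add, map_one]

lemma not_isBoundary_of_parity {u v : ZMod (2 * n)} (hu : parity n u = 0)
    (hv : parity n v = 0) : ¬ IsBoundary (2 * n) s(u, v) := by
  rintro ⟨i, hi⟩
  rcases Sym2.eq_iff.mp hi with ⟨rfl, rfl⟩ | ⟨rfl, rfl⟩ <;>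
    simp_all [parity_add_one]

variable [NeZero n]

/-- The ears `(2j, 2j+1, 2j+2)` cut off the odd vertices; the fan from `0` triangulates the
remaining `n`-gon on the even vertices. -/
def earFan (n : ℕ) [NeZero n] : Finset (Sym2 (ZMod (2 * n))) :=
  univ.image (fun j => s(double n j, double n (j + 1))) ∪
    (univ \ {0, 1, -1}).image fun j => s(0, double n j)

lemma mem_earFan {e : Sym2 (ZMod (2 * n))} :
    e ∈ earFan n ↔ (∃ j, s(double n j, double n (j + 1)) = e) ∨
      ∃ j, j ≠ 0 ∧ j ≠ 1 ∧ j ≠ -1 ∧ s(0, double n j) = e := by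
  simp [earFan, and_assoc]

lemma parity_of_mem_earFan {e : Sym2 (ZMod (2 * n))} (he : e ∈ earFan n) {x : ZMod (2 * n)}
    (hx : x ∈ e) : parity n x = 0 := by
  rcases mem_earFan.mp he with ⟨j, rfl⟩ | ⟨j, -, -, -, rfl⟩ <;>
    rcases Sym2.mem_iff.mp hx with rfl | rfl <;> simp [parity_double]

lemma not_cross_ear_s10 (hn : 2 ≤ n) (j : ZMod n) {g : Sym2 (ZMod (2 * n))} (hg : g ∈ earFan n) :
    ¬ Cross (2 * n) s(double n j, double n (j + 1)) g := by
  intro h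
  rw [map_add, double_one] at h
  have := parity_of_mem_earFan hg (h.add_one_mem (by omega))
  simp [parity_add_one, parity_double] at this

lemma card_earFan (hn : 3 ≤ n) : (earFan n).card = 2 * n - 3 := by
  have h1 := ZMod.one_ne_zero_of_two_le (n := n) (by omega)
  have h2 : (1 : ZMod n) ≠ -1 := by
    exact_mod_cast ZMod.intCast_ne_intCast (n := n) (a := 1) (b := -1) (by omega)
      (by omega) (by omega)
  have h2' : (2 : ZMod n) ≠ 0 := by
    exact_mod_cast ZMod.intCast_ne_intCast (n := n) (a := 2) (b := 0) (by omega)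
      (by omega) (by omega)
  have hears : Injective fun j : ZMod n => s(double n j, double n (j + 1)) := by
    intro i j hij
    rcases Sym2.eq_iff.mp hij with ⟨h, -⟩ | ⟨h, h'⟩
    · exact double_injective h
    · rw [double_injective.eq_iff] at h h'
      subst h
      exact absurd (by linear_combination h') h2'
  have hfan : Injective fun j : ZMod n => s(0, double n j) :=
    fun i j hij => double_injective (Sym2.congr_right.mp hij)
  have hdisj : Disjoint (univ.image fun j => s(double n j, double n (j + 1)))
      ((univ \ {0, 1, -1}).image fun j => s(0, double n j)) := by
    simp only [disjoint_left, mem_image, mem_univ, true_and, mem_sdiff, mem_insert,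
      mem_singleton, not_exists, not_and, not_or]
    rintro _ ⟨i, rfl⟩ j ⟨hj0, hj1, hjm⟩ hij
    rcases Sym2.eq_iff.mp hij with ⟨h, h'⟩ | ⟨h, h'⟩
    · rw [← map_zero (double n), double_injective.eq_iff] at h
      subst h
      exact hj1 (double_injective (by rw [h', zero_add]))
    · rw [← map_zero (double n), double_injective.eq_iff] at h
      rw [double_injective.eq_iff] at h'
      exact hjm (h'.trans (eq_neg_of_add_eq_zero_left h.symm))
  rw [earFan, card_union_of_disjoint hdisj, card_image_of_injective _ hears,
    card_image_of_injective _ hfan, card_sdiff_of_subset (subset_univ _), card_univ,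
    ZMod.card, card_insert_of_notMem (by simp [h1, h1.symm]),
    card_pair h2]
  omega

lemma isTriangulation_earFan (hn : 3 ≤ n) : IsTriangulation (2 * n) (earFan n) := by
  refine ⟨card_earFan hn, fun e he => ?_, fun e he g hg hcross => ?_⟩
  · refine ⟨fun hdiag => ?_, ?_⟩
    · rcases mem_earFan.mp he with ⟨j, rfl⟩ | ⟨j, hj, -, -, rfl⟩
      · exact ZMod.one_ne_zero_of_two_le (n := n) (by omega)
          (by simpa using double_injective (Sym2.mk_isDiag_iff.mp hdiag))
      · exact hj (double_injective (by rw [map_zero]; exact (Sym2.mk_isDiag_iff.mp hdiag).symm))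
    · induction e with
      | _ u v =>
        exact not_isBoundary_of_parity (parity_of_mem_earFan he (Sym2.mem_mk_left u v))
          (parity_of_mem_earFan he (Sym2.mem_mk_right u v))
  · rcases mem_earFan.mp he with ⟨j, rfl⟩ | ⟨j, -, -, -, rfl⟩
    · exact not_cross_ear_s10 (by omega) j hg hcross
    rcases mem_earFan.mp hg with ⟨i, rfl⟩ | ⟨i, -, -, -, rfl⟩
    · exact not_cross_ear_s10 (by omega) i he hcross.symm
    · exact hcross.notMem_of_mem (Sym2.mem_mk_left _ _) (Sym2.mem_mk_left _ _)

end EarFan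

section Safe

variable {n : ℕ}

def IsSafe (n : ℕ) (u v : ZMod (2 * n)) : Prop :=
  v - u ≠ 1 ∧ u - v ≠ 1 ∧
    (parity n u = 0 → parity n v = 0 → v - u ≠ 2 ∧ u - v ≠ 2 ∧ u ≠ 0 ∧ v ≠ 0)

instance (u v : ZMod (2 * n)) : Decidable (IsSafe n u v) :=
  inferInstanceAs (Decidable (_ ∧ _ ∧ _))

lemma IsSafe.symm {u v : ZMod (2 * n)} (h : IsSafe n u v) : IsSafe n v u :=
  ⟨h.2.1, h.1, fun hv hu =>
    have h' := h.2.2 hu hv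
    ⟨h'.2.1, h'.1, h'.2.2.2, h'.2.2.1⟩⟩

lemma IsSafe.not_isBoundary {u v : ZMod (2 * n)} (h : IsSafe n u v) :
    ¬ IsBoundary (2 * n) s(u, v) := by
  rintro ⟨i, hi⟩
  rcases Sym2.eq_iff.mp hi with ⟨rfl, rfl⟩ | ⟨rfl, rfl⟩
  · exact h.1 (add_sub_cancel_left _ _)
  · exact h.2.1 (add_sub_cancel_left _ _)

lemma IsSafe.notMem_earFan [NeZero n] {u v : ZMod (2 * n)} (h : IsSafe n u v) :
    s(u, v) ∉ earFan n := by
  intro he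
  have h' := h.2.2 (parity_of_mem_earFan he (Sym2.mem_mk_left u v))
    (parity_of_mem_earFan he (Sym2.mem_mk_right u v))
  rcases mem_earFan.mp he with ⟨j, hj⟩ | ⟨j, -, -, -, hj⟩ <;>
    rcases Sym2.eq_iff.mp hj with ⟨rfl, rfl⟩ | ⟨rfl, rfl⟩
  · exact h'.1 (by rw [map_add, double_one, add_sub_cancel_left])
  · exact h'.2.1 (by rw [map_add, double_one, add_sub_cancel_left])
  · exact h'.2.2.1 rfl
  · exact h'.2.2.2 rfl

lemma isSafe_of_odd {u v : ZMod (2 * n)} (m : ℤ) (hm : v - u = m)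
    (hodd : parity n u = 1 ∨ parity n v = 1) (h₁ : m ≠ 1) (h₂ : m ≠ -1)
    (hlo : 1 - 2 * (n : ℤ) < m) (hhi : m < 2 * n - 1) : IsSafe n u v := by
  refine ⟨?_, ?_, fun hu hv => by rcases hodd with h | h <;> simp_all⟩
  · rw [hm]
    exact_mod_cast ZMod.intCast_ne_intCast h₁ (by push_cast; omega) (by push_cast; omega)
  · rw [← neg_sub, hm]
    exact_mod_cast ZMod.intCast_ne_intCast (a := -m) (b := 1) (by omega) (by push_cast; omega)
      (by push_cast; omega)

lemma isSafe_of_ne_zero {u v : ZMod (2 * n)} (m : ℤ) (hm : v - u = m) (hu : u ≠ 0)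
    (hv : v ≠ 0) (hlo : 2 < m) (hhi : m < 2 * n - 2) : IsSafe n u v := by
  have hne : ∀ c : ℤ, -2 ≤ c → c ≤ 2 → (m : ZMod (2 * n)) ≠ c := fun c hc₁ hc₂ =>
    ZMod.intCast_ne_intCast (by omega) (by push_cast; omega) (by push_cast; omega)
  have hneg : ∀ c : ℤ, -2 ≤ c → c ≤ 2 → u - v ≠ c := fun c hc₁ hc₂ => by
    rw [← neg_sub, hm, Ne, neg_eq_iff_eq_neg]
    exact_mod_cast hne (-c) (by omega) (by omega)
  refine ⟨?_, ?_, fun _ _ => ⟨?_, ?_, hu, hv⟩⟩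
  · exact_mod_cast hm ▸ hne 1 (by omega) (by omega)
  · exact_mod_cast hneg 1 (by omega) (by omega)
  · exact_mod_cast hm ▸ hne 2 (by omega) (by omega)
  · exact_mod_cast hneg 2 (by omega) (by omega)

theorem potentiallyTriangulable_of_isSafe {V : Type*} [Fintype V] {G : SimpleGraph V}
    (hn : 3 ≤ n) {f : V → ZMod (2 * n)} (hf : Injective f)
    (hG : ∀ x y, G.Adj x y → IsSafe n (f x) (f y)) : PotentiallyTriangulable G (2 * n) :=
  have : NeZero n := ⟨by omega⟩
  potentiallyTriangulable_of_isTriangulation hf (isTriangulation_earFan hn) fun x y hxy =>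
    ⟨(hG x y hxy).not_isBoundary, (hG x y hxy).notMem_earFan⟩

end Safe

lemma petersen_adj_cases {n k : ℕ} {P : ZMod n ⊕ ZMod n → ZMod n ⊕ ZMod n → Prop}
    (hsymm : ∀ x y, P x y → P y x) (houter : ∀ i, P (.inl i) (.inl (i + 1)))
    (hinner : ∀ i, P (.inr i) (.inr (i + k))) (hspoke : ∀ i, P (.inl i) (.inr i))
    {x y : ZMod n ⊕ ZMod n} (h : (petersen n k).Adj x y) : P x y := by
  obtain ⟨-, h | h⟩ := (SimpleGraph.fromRel_adj _ x y).mp h <;>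
    rcases h with ⟨i, rfl, rfl⟩ | ⟨i, rfl, rfl⟩ | ⟨i, rfl, rfl⟩
  exacts [houter i, hinner i, hspoke i, hsymm _ _ (houter i), hsymm _ _ (hinner i),
    hsymm _ _ (hspoke i)]

section Placements

variable {n : ℕ}

lemma parity_natCast (c : ℕ) : parity n c = c := map_natCast _ c

lemma parity_double_add (i : ZMod n) (u : ZMod (2 * n)) :
    parity n (double n i + u) = parity n u := by
  rw [map_add, parity_double, zero_add]

lemma double_natCast (k : ℕ) : double n k = 2 * k := by
  simpa using double_intCast (n := n) k

def place (n : ℕ) (c : ZMod (2 * n)) (s : ZMod n → Prop) [DecidablePred s] :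
    ZMod n ⊕ ZMod n → ZMod (2 * n)
  | .inl i => double n i + if s i then c else 0
  | .inr i => double n i + if s i then 0 else c

lemma eq_and_iff_of_double_add_ite [NeZero n] {c : ZMod (2 * n)} (hc : parity n c = 1)
    {i j : ZMod n} {p q : Prop} [Decidable p] [Decidable q]
    (h : double n i + (if p then c else 0) = double n j + if q then c else 0) :
    i = j ∧ (p ↔ q) := by
  have hpq : p ↔ q := by
    have h2 := congrArg (parity n) h
    by_cases hp : p <;> by_cases hq : q <;>
      simp [hp, hq, parity_double_add, parity_double, hc] at h2 ⊢
  refine ⟨double_injective ?_, hpq⟩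
  by_cases hp : p <;> simpa [hp, hpq.mp, hpq.not.mp] using h

lemma place_injective [NeZero n] {c : ZMod (2 * n)} (hc : parity n c = 1) (s : ZMod n → Prop)
    [DecidablePred s] : Injective (place n c s) := by
  rintro (i | i) (j | j) h <;> simp only [place, ← ite_not (s _) c] at h <;>
    obtain ⟨rfl, hs⟩ := eq_and_iff_of_double_add_ite hc h
  all_goals first | rfl | simp at hs

lemma parity_natCast_of_odd {c : ℕ} (hc : Odd c) : parity n c = 1 := by
  rw [parity_natCast, ZMod.natCast_eq_one_iff_odd]
  exact hc

/-- Exchanging `a_0` and `b_0` keeps every inner edge `b_i b_{i+k}` away from the vertex `0`. -/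
def shifted (n c : ℕ) : ZMod n ⊕ ZMod n → ZMod (2 * n) :=
  place n c (fun _ => True) ∘ Equiv.swap (.inl 0) (.inr 0)

lemma shifted_inl_zero (c : ℕ) : shifted n c (.inl 0) = 0 := by
  simp [shifted, place]

lemma shifted_inr_zero (c : ℕ) : shifted n c (.inr 0) = c := by
  simp [shifted, place]

lemma shifted_inl (c : ℕ) {i : ZMod n} (hi : i ≠ 0) :
    shifted n c (.inl i) = double n i + c := by
  simp [shifted, place, Equiv.swap_apply_of_ne_of_ne, hi]

lemma shifted_inr (c : ℕ) {i : ZMod n} (hi : i ≠ 0) : shifted n c (.inr i) = double n i := by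
  simp [shifted, place, Equiv.swap_apply_of_ne_of_ne, hi]

lemma isSafe_shifted_outer {c : ℕ} (hc : Odd c) (hc₃ : 3 < c) (hcn : c + 2 < 2 * n - 1)
    (i : ZMod n) : IsSafe n (shifted n c (.inl i)) (shifted n c (.inl (i + 1))) := by
  have : NeZero n := ⟨by omega⟩
  have hodd : ∀ i, parity n (double n i + c) = 1 := fun i => by
    rw [parity_double_add, parity_natCast_of_odd hc]
  rcases eq_or_ne i 0 with rfl | hi
  · rw [zero_add, shifted_inl_zero, shifted_inl c (ZMod.one_ne_zero_of_two_le (by omega))]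
    exact isSafe_of_odd (2 + c) (by rw [double_one]; push_cast; ring) (.inr (hodd 1))
      (by omega) (by omega) (by omega) (by omega)
  rcases eq_or_ne (i + 1) 0 with hi' | hi'
  · rw [hi', shifted_inl_zero, shifted_inl c hi]
    refine isSafe_of_odd (2 - c) ?_ (.inl (hodd i)) (by omega) (by omega) (by omega) (by omega)
    rw [eq_neg_of_add_eq_zero_left hi', map_neg, double_one]
    push_cast
    ring
  · rw [shifted_inl c hi, shifted_inl c hi']
    exact isSafe_of_odd 2 (by rw [map_add, double_one]; push_cast; ring) (.inl (hodd i))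
      (by omega) (by omega) (by omega) (by omega)

lemma isSafe_shifted_inner {k c : ℕ} (hk : 2 ≤ k) (hc : Odd c) (hck : c + 2 * k < 2 * n - 1)
    (hc₁ : c ≠ 2 * k - 1) (hc₂ : c ≠ 2 * k + 1) (i : ZMod n) :
    IsSafe n (shifted n c (.inr i)) (shifted n c (.inr (i + k))) := by
  have : NeZero n := ⟨by omega⟩
  have hcpar := parity_natCast_of_odd (n := n) hc
  have := hc.pos
  have hk₀ : (k : ZMod n) ≠ 0 := by
    rw [Ne, ZMod.natCast_eq_zero_iff]
    exact fun h => by have := Nat.eq_zero_of_dvd_of_lt h (by omega); omega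
  rcases eq_or_ne i 0 with rfl | hi
  · rw [zero_add, shifted_inr_zero, shifted_inr c hk₀]
    exact isSafe_of_odd (2 * k - c) (by rw [double_natCast]; push_cast; ring) (.inl hcpar)
      (by omega) (by omega) (by omega) (by omega)
  rcases eq_or_ne (i + k) 0 with hi' | hi'
  · rw [hi', shifted_inr_zero, shifted_inr c hi]
    refine isSafe_of_odd (c + 2 * k) ?_ (.inr hcpar) (by omega) (by omega) (by omega)
      (by omega)
    rw [eq_neg_of_add_eq_zero_left hi', map_neg, double_natCast]
    push_cast
    ring
  · rw [shifted_inr c hi, shifted_inr c hi']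
    exact isSafe_of_ne_zero (2 * k) (by rw [map_add, double_natCast]; push_cast; ring)
      (fun h => hi (double_injective (h.trans (map_zero _).symm)))
      (fun h => hi' (double_injective (h.trans (map_zero _).symm))) (by omega) (by omega)

lemma isSafe_shifted_spoke {c : ℕ} (hc : Odd c) (hc₁ : 1 < c) (hcn : c + 1 < 2 * n)
    (i : ZMod n) : IsSafe n (shifted n c (.inl i)) (shifted n c (.inr i)) := by
  have : NeZero n := ⟨by omega⟩
  have hcpar := parity_natCast_of_odd (n := n) hc
  rcases eq_or_ne i 0 with rfl | hi
  · rw [shifted_inl_zero, shifted_inr_zero]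
    exact isSafe_of_odd c (by push_cast; ring) (.inr hcpar) (by omega) (by omega) (by omega)
      (by omega)
  · rw [shifted_inl c hi, shifted_inr c hi]
    exact isSafe_of_odd (-c) (by push_cast; ring) (.inl (by rw [parity_double_add, hcpar]))
      (by omega) (by omega) (by omega) (by omega)

theorem potentiallyTriangulable_petersen_of_shift {k c : ℕ} (hk : 2 ≤ k) (hc : Odd c)
    (hc₃ : 3 < c) (hck : c + 2 * k < 2 * n - 1) (hc₁ : c ≠ 2 * k - 1)
    (hc₂ : c ≠ 2 * k + 1) :
    PotentiallyTriangulable (petersen n k) (2 * n) := by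
  have : NeZero n := ⟨by omega⟩
  refine potentiallyTriangulable_of_isSafe (by omega)
    ((place_injective (parity_natCast_of_odd hc) _).comp (Equiv.injective _)) fun x y =>
      petersen_adj_cases (P := fun x y => IsSafe n (shifted n c x) (shifted n c y))
        (fun _ _ => IsSafe.symm) (isSafe_shifted_outer hc hc₃ (by omega))
        (isSafe_shifted_inner hk hc hck hc₁ hc₂) (isSafe_shifted_spoke hc (by omega) (by omega))

lemma parity_five : parity n 5 = 1 := by
  rw [map_ofNat]
  decide

lemma isSafe_step (hn : 5 ≤ n) (i : ZMod n) (p : Prop) [Decidable p] :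
    IsSafe n (double n i + if p then 5 else 0) (double n (i + 1) + if ¬ p then 5 else 0) := by
  have hodd := fun i => parity_double_add (n := n) i 5
  by_cases hp : p <;> simp only [hp, if_true, if_false, not_true, not_false_eq_true, add_zero]
  · exact isSafe_of_odd (-3) (by rw [map_add, double_one]; push_cast; ring)
      (.inl (by rw [hodd, parity_five])) (by omega) (by omega) (by omega) (by omega)
  · exact isSafe_of_odd 7 (by rw [map_add, double_one]; push_cast; ring)
      (.inr (by rw [hodd, parity_five])) (by omega) (by omega) (by omega) (by omega)

lemma isSafe_spoke (hn : 4 ≤ n) (i : ZMod n) (p : Prop) [Decidable p] :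
    IsSafe n (double n i + if p then 5 else 0) (double n i + if ¬ p then 5 else 0) := by
  have hodd := fun i => parity_double_add (n := n) i 5
  by_cases hp : p <;> simp only [hp, if_true, if_false, not_true, not_false_eq_true, add_zero]
  · exact isSafe_of_odd (-5) (by push_cast; ring) (.inl (by rw [hodd, parity_five]))
      (by omega) (by omega) (by omega) (by omega)
  · exact isSafe_of_odd 5 (by push_cast; ring) (.inr (by rw [hodd, parity_five]))
      (by omega) (by omega) (by omega) (by omega)

-- `5` is the least odd shift for which the edge lengths `±5` and `2 ± 5` all avoid `±1`
def alternating (n : ℕ) : ZMod n ⊕ ZMod n → ZMod (2 * n) :=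
  place n 5 fun i => Even i.val

lemma alternating_injective [NeZero n] : Injective (alternating n) :=
  place_injective parity_five _

lemma isSafe_alternating_outer (hn : 5 ≤ n) {i : ZMod n} (h : Even n ∨ i + 1 ≠ 0) :
    IsSafe n (alternating n (.inl i)) (alternating n (.inl (i + 1))) := by
  have : NeZero n := ⟨by omega⟩
  simpa [alternating, place, ZMod.even_val_add_one_iff h] using isSafe_step hn i (Even i.val)

lemma isSafe_alternating_inner (hn : 5 ≤ n) {i : ZMod n} (h : Even n ∨ i + 1 ≠ 0) :
    IsSafe n (alternating n (.inr i)) (alternating n (.inr (i + 1))) := by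
  have : NeZero n := ⟨by omega⟩
  simpa [alternating, place, ZMod.even_val_add_one_iff h, ← ite_not (Even i.val)]
    using isSafe_step hn i (¬ Even i.val)

lemma isSafe_alternating_spoke (hn : 4 ≤ n) (i : ZMod n) :
    IsSafe n (alternating n (.inl i)) (alternating n (.inr i)) := by
  simpa [alternating, place, ← ite_not (Even i.val)] using isSafe_spoke hn i (Even i.val)

theorem potentiallyTriangulable_petersen_one_of_even (hn : 5 ≤ n) (he : Even n) :
    PotentiallyTriangulable (petersen n 1) (2 * n) := by
  have : NeZero n := ⟨by omega⟩
  refine potentiallyTriangulable_of_isSafe (by omega) alternating_injective fun x y =>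
    petersen_adj_cases (P := fun x y => IsSafe n (alternating n x) (alternating n y))
      (fun _ _ => IsSafe.symm) (fun i => isSafe_alternating_outer hn (.inl he))
      (fun i => ?_) (isSafe_alternating_spoke (by omega))
  simpa using isSafe_alternating_inner hn (i := i) (.inl he)

/-- For odd `n` the alternation puts `b_{-1} b_0` on the ear `(-2, 0)`; exchanging `a_1` and `b_0`
moves `b_0` to `2` and `a_1` to `0`, whose neighbours `a_0, a_2, b_1` are odd. -/
def oddAlternating (n : ℕ) : ZMod n ⊕ ZMod n → ZMod (2 * n) :=
  alternating n ∘ Equiv.swap (.inl 1) (.inr 0)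

lemma oddAlternating_of_ne {x : ZMod n ⊕ ZMod n} (h₁ : x ≠ .inl 1) (h₀ : x ≠ .inr 0) :
    oddAlternating n x = alternating n x := by
  simp [oddAlternating, Equiv.swap_apply_of_ne_of_ne h₁ h₀]

lemma oddAlternating_inl_one : oddAlternating n (.inl 1) = 0 := by
  simp [oddAlternating, alternating, place]

lemma oddAlternating_inr_zero (hn : 2 ≤ n) : oddAlternating n (.inr 0) = 2 := by
  simp [oddAlternating, alternating, place, ZMod.val_one'' (show n ≠ 1 by omega), double_one]

lemma oddAlternating_inl_zero (hn : 2 ≤ n) : oddAlternating n (.inl 0) = 5 := by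
  rw [oddAlternating_of_ne (by simpa using (ZMod.one_ne_zero_of_two_le hn).symm) (by simp)]
  simp [alternating, place]

lemma isSafe_oddAlternating_outer (hn : 7 ≤ n) (ho : Odd n) (i : ZMod n) :
    IsSafe n (oddAlternating n (.inl i)) (oddAlternating n (.inl (i + 1))) := by
  have : NeZero n := ⟨by omega⟩
  have h1 := ZMod.one_ne_zero_of_two_le (n := n) (by omega)
  have h5 := fun i => (parity_double_add (n := n) i 5).trans parity_five
  rcases eq_or_ne i 0 with rfl | hi₀
  · rw [zero_add, oddAlternating_inl_zero (by omega), oddAlternating_inl_one]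
    exact isSafe_of_odd (-5) (by push_cast; ring) (.inl parity_five) (by omega) (by omega)
      (by omega) (by omega)
  rcases eq_or_ne i 1 with rfl | hi₁
  · have hv2 : Even (1 + 1 : ZMod n).val := by
      rw [ZMod.val_add_one_eq_ite, ZMod.val_one'' (by omega), if_neg (by omega)]
      decide
    rw [oddAlternating_inl_one, oddAlternating_of_ne (by simpa using h1) (by simp)]
    simp only [alternating, place, if_pos hv2]
    exact isSafe_of_odd 9 (by rw [map_add, double_one]; push_cast; ring) (.inr (h5 _))
      (by omega) (by omega) (by omega) (by omega)
  rcases eq_or_ne (i + 1) 0 with him | him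
  · rw [him, oddAlternating_inl_zero (by omega),
      oddAlternating_of_ne (x := .inl i) (by simpa using hi₁) (by simp),
      eq_neg_of_add_eq_zero_left him]
    simp only [alternating, place, if_pos (ZMod.even_val_neg_one ho)]
    exact isSafe_of_odd 2 (by rw [map_neg, double_one]; push_cast; ring) (.inl (h5 _))
      (by omega) (by omega) (by omega) (by omega)
  rw [oddAlternating_of_ne (by simpa using hi₁) (by simp),
    oddAlternating_of_ne (by simpa using hi₀) (by simp)]
  exact isSafe_alternating_outer (by omega) (.inr him)

lemma isSafe_oddAlternating_inner (hn : 5 ≤ n) (ho : Odd n) (i : ZMod n) :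
    IsSafe n (oddAlternating n (.inr i)) (oddAlternating n (.inr (i + 1))) := by
  have : NeZero n := ⟨by omega⟩
  have h1 := ZMod.one_ne_zero_of_two_le (n := n) (by omega)
  rcases eq_or_ne i 0 with rfl | hi₀
  · have hv1 : ¬ Even (1 : ZMod n).val := by
      rw [ZMod.val_one'' (by omega)]
      decide
    rw [zero_add, oddAlternating_inr_zero (by omega),
      oddAlternating_of_ne (by simp) (by simpa using h1)]
    simp only [alternating, place, if_neg hv1]
    exact isSafe_of_odd 5 (by rw [double_one]; push_cast; ring)
      (.inr ((parity_double_add _ _).trans parity_five)) (by omega) (by omega) (by omega)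
      (by omega)
  rcases eq_or_ne (i + 1) 0 with him | him
  · have h2 : (2 : ZMod (2 * n)) ≠ 0 := by
      exact_mod_cast ZMod.intCast_ne_intCast (n := 2 * n) (a := 2) (b := 0) (by omega)
        (by push_cast; omega) (by push_cast; omega)
    rw [him, oddAlternating_inr_zero (by omega),
      oddAlternating_of_ne (x := .inr i) (by simp) (by simpa using hi₀),
      eq_neg_of_add_eq_zero_left him]
    simp only [alternating, place, if_pos (ZMod.even_val_neg_one ho), add_zero, map_neg,
      double_one]
    exact isSafe_of_ne_zero 4 (by push_cast; ring) (neg_ne_zero.mpr h2) h2 (by omega) (by omega)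
  rw [oddAlternating_of_ne (by simp) (by simpa using hi₀),
    oddAlternating_of_ne (by simp) (by simpa using him)]
  exact isSafe_alternating_inner (by omega) (.inr him)

lemma isSafe_oddAlternating_spoke (hn : 5 ≤ n) (i : ZMod n) :
    IsSafe n (oddAlternating n (.inl i)) (oddAlternating n (.inr i)) := by
  have : NeZero n := ⟨by omega⟩
  have h1 := ZMod.one_ne_zero_of_two_le (n := n) (by omega)
  rcases eq_or_ne i 0 with rfl | hi₀
  · rw [oddAlternating_inl_zero (by omega), oddAlternating_inr_zero (by omega)]
    exact isSafe_of_odd (-3) (by push_cast; ring) (.inl parity_five) (by omega) (by omega)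
      (by omega) (by omega)
  rcases eq_or_ne i 1 with rfl | hi₁
  · have hv1 : ¬ Even (1 : ZMod n).val := by
      rw [ZMod.val_one'' (by omega)]
      decide
    rw [oddAlternating_inl_one, oddAlternating_of_ne (by simp) (by simpa using h1)]
    simp only [alternating, place, if_neg hv1]
    exact isSafe_of_odd 7 (by rw [double_one]; push_cast; ring)
      (.inr ((parity_double_add _ _).trans parity_five)) (by omega) (by omega) (by omega)
      (by omega)
  rw [oddAlternating_of_ne (by simpa using hi₁) (by simp),
    oddAlternating_of_ne (by simp) (by simpa using hi₀)]
  exact isSafe_alternating_spoke (by omega) i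

theorem potentiallyTriangulable_petersen_one_of_odd (hn : 7 ≤ n) (ho : Odd n) :
    PotentiallyTriangulable (petersen n 1) (2 * n) := by
  have : NeZero n := ⟨by omega⟩
  refine potentiallyTriangulable_of_isSafe (by omega)
    (alternating_injective.comp (Equiv.injective _)) fun x y =>
      petersen_adj_cases (P := fun x y => IsSafe n (oddAlternating n x) (oddAlternating n y))
        (fun _ _ => IsSafe.symm) (isSafe_oddAlternating_outer hn ho) (fun i => ?_)
        (isSafe_oddAlternating_spoke (by omega))
  simpa using isSafe_oddAlternating_inner (by omega) ho i

end Placements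

section Small

instance {n k : ℕ} [NeZero n] : DecidableRel (petersen n k).Adj := fun x y =>
  decidable_of_iff _ (SimpleGraph.fromRel_adj _ x y).symm

theorem potentiallyTriangulable_petersen_five_two :
    PotentiallyTriangulable (petersen 5 2) (2 * 5) :=
  potentiallyTriangulable_of_isSafe (f := Sum.elim ![6, 1, 5, 0, 3] ![9, 4, 2, 7, 8])
    (by norm_num) (by decide) (by decide)

theorem potentiallyTriangulable_petersen_six_two :
    PotentiallyTriangulable (petersen 6 2) (2 * 6) :=
  potentiallyTriangulable_of_isSafe (f := Sum.elim ![6, 3, 0, 7, 10, 1] ![2, 8, 9, 11, 5, 4])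
    (by norm_num) (by decide) (by decide)

theorem potentiallyTriangulable_petersen_seven_three :
    PotentiallyTriangulable (petersen 7 3) (2 * 7) :=
  potentiallyTriangulable_of_isSafe
    (f := Sum.elim ![1, 8, 12, 6, 13, 9, 5] ![4, 3, 7, 11, 10, 0, 2]) (by norm_num) (by decide)
    (by decide)

theorem potentiallyTriangulable_petersen_eight_three :
    PotentiallyTriangulable (petersen 8 3) (2 * 8) :=
  potentiallyTriangulable_of_isSafe
    (f := Sum.elim ![12, 15, 2, 10, 3, 13, 6, 1] ![4, 9, 5, 7, 0, 8, 14, 11]) (by norm_num)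
    (by decide) (by decide)

/-- No placement of `P(5, 1)` satisfies `IsSafe` on every edge, so `earFan 5` is replaced by
another triangulation. -/
theorem potentiallyTriangulable_petersen_five_one :
    PotentiallyTriangulable (petersen 5 1) (2 * 5) := by
  refine potentiallyTriangulable_of_isTriangulation
    (f := Sum.elim ![4, 0, 6, 3, 7] ![8, 2, 9, 1, 5])
    (T := {s(0, 7), s(1, 7), s(2, 4), s(2, 6), s(2, 7), s(4, 6), s(7, 9)}) (by decide)
    ⟨by decide, by decide, ?_⟩ (by decide)
  intro e he g hg
  fin_cases he <;> fin_cases hg <;> (rw [cross_mk_iff]; decide)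

end Small

/-- For `n ≥ 5` and `1 ≤ k < n/2`, the generalized Petersen graph `P(n, k)` is
potentially triangulable in the convex complete graph `K_{2n}`. -/
theorem stmt10 (n k : ℕ) (hn : 5 ≤ n) (hk1 : 1 ≤ k) (hk2 : 2 * k < n) :
    PotentiallyTriangulable (petersen n k) (2 * n) := by
  obtain rfl | hk := hk1.eq_or_lt
  · rcases Nat.even_or_odd n with he | ho
    · exact potentiallyTriangulable_petersen_one_of_even hn he
    obtain rfl | hn7 : n = 5 ∨ 7 ≤ n := by obtain ⟨m, rfl⟩ := ho; omega
    · exact potentiallyTriangulable_petersen_five_one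
    · exact potentiallyTriangulable_petersen_one_of_odd hn7 ho
  obtain rfl | rfl | hk4 : k = 2 ∨ k = 3 ∨ 4 ≤ k := by omega
  · obtain rfl | rfl | hn7 : n = 5 ∨ n = 6 ∨ 7 ≤ n := by omega
    · exact potentiallyTriangulable_petersen_five_two
    · exact potentiallyTriangulable_petersen_six_two
    · exact potentiallyTriangulable_petersen_of_shift (c := 7) le_rfl (by decide) (by omega)
        (by omega) (by omega) (by omega)
  · obtain rfl | rfl | hn9 : n = 7 ∨ n = 8 ∨ 9 ≤ n := by omega
    · exact potentiallyTriangulable_petersen_seven_three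
    · exact potentiallyTriangulable_petersen_eight_three
    · exact potentiallyTriangulable_petersen_of_shift (c := 9) (by omega) (by decide) (by omega)
        (by omega) (by omega) (by omega)
  · exact potentiallyTriangulable_petersen_of_shift (c := 5) (by omega) (by decide) (by omega)
      (by omega) (by omega) (by omega)

end ConvexTri
end

section
/- Let n ≥ 8 be even and write n = 2^s · t with s ≥ 1 and t odd; put α = t + 2. Then gcd(α, n) = 1, so the edge set H = {v_{iα} v_{(i+1)α} : i = 0, 1, …, n−1} (all indices taken modulo n) forms a Hamiltonian cycle of the convex complete graph K_n containing no boundary edge, and K_n − H admits a triangulation. -/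
namespace ConvexTri

lemma dvd_small {n x : ℕ} (h : n ∣ x) (h2 : x < 2 * n) : x = 0 ∨ x = n := by
  rcases h with ⟨k, rfl⟩
  match k with
  | 0 => left; simp
  | 1 => right; simp
  | (k+2) =>
    exfalso
    have h3 : n * 2 ≤ n * (k + 2) := Nat.mul_le_mul_left _ (by omega)
    have h4 := lt_of_le_of_lt h3 h2
    rw [Nat.mul_comm] at h4
    exact lt_irrefl _ h4

lemma cast_eq_cases {n x y : ℕ} (hn : 0 < n) (hx : x < 2*n) (hy : y < 2*n)
    (h : (x : ZMod n) = (y : ZMod n)) : x = y ∨ x + n = y ∨ y + n = x := by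
  haveI : NeZero n := ⟨by omega⟩
  rcases le_total x y with hle | hle
  · have h2 : ((y - x : ℕ) : ZMod n) = 0 := by
      rw [Nat.cast_sub hle, h, sub_self]
    have h3 := dvd_small ((ZMod.natCast_eq_zero_iff _ _).mp h2) (by omega)
    omega
  · have h2 : ((x - y : ℕ) : ZMod n) = 0 := by
      rw [Nat.cast_sub hle, h, sub_self]
    have h3 := dvd_small ((ZMod.natCast_eq_zero_iff _ _).mp h2) (by omega)
    omega

lemma valsub {n u v : ℕ} (hu : u < n) (hv : v < n) :
    ((u : ZMod n) - (v : ZMod n)).val = if v ≤ u then u - v else n + u - v := by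
  have h1 : ((u : ZMod n) - (v : ZMod n)) = ((n + u - v : ℕ) : ZMod n) := by
    rw [Nat.cast_sub (by omega), Nat.cast_add, ZMod.natCast_self, zero_add]
  rw [h1, ZMod.val_natCast]
  split
  · next h =>
    rw [show n + u - v = n + (u - v) by omega, Nat.add_mod_left, Nat.mod_eq_of_lt (by omega)]
  · next h => exact Nat.mod_eq_of_lt (by omega)

lemma arc_dest {n u v w : ℕ} (h : InOpenArc n u v w)
    (hu : u < n) (hv : v < n) (hw : w < n) :
    0 < (if u ≤ w then w - u else n + w - u) ∧
      (if u ≤ w then w - u else n + w - u) < (if u ≤ v then v - u else n + v - u) := by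
  obtain ⟨h1, h2⟩ := h
  rw [valsub hw hu] at h1 h2
  rw [valsub hv hu] at h2
  exact ⟨h1, h2⟩

lemma noCross {n x y u v : ℕ} (hxy : x < y) (hy : y < n) (hu : u < n) (hv : v < n)
    (hcond : ¬ ((x < u ∧ u < y ∧ (v < x ∨ y < v)) ∨ (x < v ∧ v < y ∧ (u < x ∨ y < u)))) :
    ¬ Cross n s((x : ZMod n), (y : ZMod n)) s((u : ZMod n), (v : ZMod n)) := by
  rintro ⟨A, B, C, D, hE, hF, h1, h2⟩
  rw [Sym2.eq_iff] at hE hF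
  rcases hE with ⟨rfl, rfl⟩ | ⟨rfl, rfl⟩ <;> rcases hF with ⟨rfl, rfl⟩ | ⟨rfl, rfl⟩
  · have g1 := arc_dest h1 (by omega) (by omega) (by omega)
    have g2 := arc_dest h2 (by omega) (by omega) (by omega)
    split_ifs at g1 g2 <;> omega
  · have g1 := arc_dest h1 (by omega) (by omega) (by omega)
    have g2 := arc_dest h2 (by omega) (by omega) (by omega)
    split_ifs at g1 g2 <;> omega
  · have g1 := arc_dest h1 (by omega) (by omega) (by omega)
    have g2 := arc_dest h2 (by omega) (by omega) (by omega)
    split_ifs at g1 g2 <;> omega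
  · have g1 := arc_dest h1 (by omega) (by omega) (by omega)
    have g2 := arc_dest h2 (by omega) (by omega) (by omega)
    split_ifs at g1 g2 <;> omega

lemma edge_eq_nat {n x y u v : ℕ} (hn : 0 < n) (hx : x < n) (hy : y < n) (hu : u < n) (hv : v < n)
    (h : s((x : ZMod n), (y : ZMod n)) = s((u : ZMod n), (v : ZMod n))) :
    (x = u ∧ y = v) ∨ (x = v ∧ y = u) := by
  simp only [Sym2.eq_iff] at h
  rcases h with ⟨h1, h2⟩ | ⟨h1, h2⟩
  · left
    constructor
    · rcases cast_eq_cases hn (by omega) (by omega) h1 with h | h | h <;> omega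
    · rcases cast_eq_cases hn (by omega) (by omega) h2 with h | h | h <;> omega
  · right
    constructor
    · rcases cast_eq_cases hn (by omega) (by omega) h1 with h | h | h <;> omega
    · rcases cast_eq_cases hn (by omega) (by omega) h2 with h | h | h <;> omega

lemma main_s12 {n a : ℕ} (hn : 8 ≤ n) (ha3 : 3 ≤ a) (han : a + 3 ≤ n)
    (h2an : 2*a ≠ n) (h2an2 : 2*a ≠ n + 2) (hpar : n % 2 = 0)
    (hcop : Nat.Coprime a n) :
    IsHamCycle n
      (Finset.image
        (fun i : ℕ => s(((a : ℕ) : ZMod n) * (i : ZMod n),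
          ((a : ℕ) : ZMod n) * ((i : ZMod n) + 1))) (Finset.range n)) ∧
    (∀ e ∈ Finset.image
        (fun i : ℕ => s(((a : ℕ) : ZMod n) * (i : ZMod n),
          ((a : ℕ) : ZMod n) * ((i : ZMod n) + 1))) (Finset.range n),
      ¬ IsBoundary n e) ∧
    AdmitsTriangulation n
      (Finset.image
        (fun i : ℕ => s(((a : ℕ) : ZMod n) * (i : ZMod n),
          ((a : ℕ) : ZMod n) * ((i : ZMod n) + 1))) (Finset.range n)) := by
  haveI : NeZero n := ⟨by omega⟩
  set u : (ZMod n)ˣ := ZMod.unitOfCoprime a hcop with hudef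
  have hu : (u : ZMod n) = (a : ZMod n) := ZMod.coe_unitOfCoprime a hcop
  set F : Finset (Sym2 (ZMod n)) := Finset.image
    (fun i : ℕ => s(((a : ℕ) : ZMod n) * (i : ZMod n),
      ((a : ℕ) : ZMod n) * ((i : ZMod n) + 1))) (Finset.range n) with hFdef
  -- membership in F
  have hFmem : ∀ e, e ∈ F ↔ ∃ k : ℕ, k < n ∧
      e = s((a : ZMod n) * (k : ZMod n), (a : ZMod n) * (k : ZMod n) + (a : ZMod n)) := by
    intro e
    rw [hFdef, Finset.mem_image]
    constructor
    · rintro ⟨k, hk, rfl⟩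
      exact ⟨k, Finset.mem_range.mp hk, by rw [mul_add, mul_one]⟩
    · rintro ⟨k, hk, rfl⟩
      exact ⟨k, Finset.mem_range.mpr hk, by rw [mul_add, mul_one]⟩
  -- no boundary edges in F
  have hnb : ∀ e ∈ F, ¬ IsBoundary n e := by
    intro e he hb
    obtain ⟨i, rfl⟩ := hb
    rw [hFmem] at he
    obtain ⟨k, hk, hk2⟩ := he
    rw [Sym2.eq_iff] at hk2
    rcases hk2 with ⟨h1, h2⟩ | ⟨h1, h2⟩
    · rw [h1] at h2
      have h3 : ((1:ℕ) : ZMod n) = ((a:ℕ) : ZMod n) := by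
        push_cast
        exact add_left_cancel h2
      rcases cast_eq_cases (by omega) (by omega) (by omega) h3 with h | h | h <;> omega
    · rw [h1] at h2
      have h3 : ((a+1:ℕ) : ZMod n) = ((0:ℕ) : ZMod n) := by
        push_cast
        linear_combination h2
      rcases cast_eq_cases (by omega) (by omega) (by omega) h3 with h | h | h <;> omega
  -- injectivity
  have hinj : Set.InjOn
      (fun i : ℕ => s(((a : ℕ) : ZMod n) * (i : ZMod n),
        ((a : ℕ) : ZMod n) * ((i : ZMod n) + 1))) ↑(Finset.range n) := by
    intro i hi j hj h
    simp only [Finset.coe_range, Set.mem_Iio] at hi hj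
    simp only [Sym2.eq_iff] at h
    rcases h with ⟨h1, h2⟩ | ⟨h1, h2⟩
    · rw [← hu] at h1
      have h3 : ((i:ℕ) : ZMod n) = ((j:ℕ) : ZMod n) := (Units.mul_right_inj u).mp h1
      rcases cast_eq_cases (by omega) (by omega) (by omega) h3 with h | h | h <;> omega
    · rw [← hu] at h1 h2
      have e1 := (Units.mul_right_inj u).mp h1
      have e2 := (Units.mul_right_inj u).mp h2
      have h3 : ((2:ℕ) : ZMod n) = ((0:ℕ) : ZMod n) := by
        push_cast
        linear_combination e2 - e1
      rcases cast_eq_cases (by omega) (by omega) (by omega) h3 with h | h | h <;> omega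
  have hcard : F.card = n := by
    rw [hFdef, Finset.card_image_of_injOn hinj, Finset.card_range]
  refine ⟨?_, hnb, ?_⟩
  · -- Hamiltonian cycle
    refine ⟨Units.mulLeft u, ?_, hcard⟩
    have hfun : (fun i : ℕ => s((Units.mulLeft u) (i : ZMod n),
        (Units.mulLeft u) ((i : ZMod n) + 1))) =
        (fun i : ℕ => s(((a : ℕ) : ZMod n) * (i : ZMod n),
          ((a : ℕ) : ZMod n) * ((i : ZMod n) + 1))) := by
      funext i
      simp only [Units.mulLeft, Equiv.coe_fn_mk, hu]
    rw [hFdef, hfun]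
  · -- triangulation
    refine ⟨hnb, ?_⟩
    set T : Finset (Sym2 (ZMod n)) :=
      (((Finset.Icc 2 (n-2)).erase a).erase (n-a)).image
        (fun j : ℕ => s(((0:ℕ) : ZMod n), (j : ZMod n))) ∪
      {s(((a-1:ℕ) : ZMod n), ((a+1:ℕ) : ZMod n)),
       s(((n-a-1:ℕ) : ZMod n), ((n-a+1:ℕ) : ZMod n))} with hTdef
    have hTmem : ∀ e, e ∈ T ↔
        (∃ j : ℕ, (2 ≤ j ∧ j ≤ n-2 ∧ j ≠ a ∧ j ≠ n-a) ∧
          s(((0:ℕ) : ZMod n), (j : ZMod n)) = e) ∨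
        e = s(((a-1:ℕ) : ZMod n), ((a+1:ℕ) : ZMod n)) ∨
        e = s(((n-a-1:ℕ) : ZMod n), ((n-a+1:ℕ) : ZMod n)) := by
      intro e
      rw [hTdef]
      simp only [Finset.mem_union, Finset.mem_image, Finset.mem_erase, Finset.mem_Icc,
        Finset.mem_insert, Finset.mem_singleton]
      constructor
      · rintro (⟨j, ⟨g1, g2, g3, g4⟩, h⟩ | h | h)
        · exact Or.inl ⟨j, ⟨g3, g4, g2, g1⟩, h⟩
        · exact Or.inr (Or.inl h)
        · exact Or.inr (Or.inr h)
      · rintro (⟨j, ⟨g1, g2, g3, g4⟩, h⟩ | h | h)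
        · exact Or.inl ⟨j, ⟨g4, g3, g1, g2⟩, h⟩
        · exact Or.inr (Or.inl h)
        · exact Or.inr (Or.inr h)
    have hSa : a ∈ Finset.Icc 2 (n-2) := Finset.mem_Icc.mpr ⟨by omega, by omega⟩
    have hSna : (n-a) ∈ (Finset.Icc 2 (n-2)).erase a :=
      Finset.mem_erase.mpr ⟨by omega, Finset.mem_Icc.mpr ⟨by omega, by omega⟩⟩
    have hfaninj : Set.InjOn (fun j : ℕ => s(((0:ℕ) : ZMod n), (j : ZMod n)))
        ↑(((Finset.Icc 2 (n-2)).erase a).erase (n-a)) := by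
      intro i hi j hj h
      have hi' := Finset.mem_coe.mp hi
      have hj' := Finset.mem_coe.mp hj
      rw [Finset.mem_erase, Finset.mem_erase, Finset.mem_Icc] at hi' hj'
      rcases edge_eq_nat (by omega) (by omega) (by omega) (by omega) (by omega) h
        with ⟨g1, g2⟩ | ⟨g1, g2⟩ <;> omega
    have hne12 : s(((a-1:ℕ) : ZMod n), ((a+1:ℕ) : ZMod n)) ≠
        s(((n-a-1:ℕ) : ZMod n), ((n-a+1:ℕ) : ZMod n)) := by
      intro h
      rcases edge_eq_nat (by omega) (by omega) (by omega) (by omega) (by omega) h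
        with ⟨g1, g2⟩ | ⟨g1, g2⟩ <;> omega
    have hdisj : Disjoint
        ((((Finset.Icc 2 (n-2)).erase a).erase (n-a)).image
          (fun j : ℕ => s(((0:ℕ) : ZMod n), (j : ZMod n))))
        ({s(((a-1:ℕ) : ZMod n), ((a+1:ℕ) : ZMod n)),
          s(((n-a-1:ℕ) : ZMod n), ((n-a+1:ℕ) : ZMod n))} : Finset (Sym2 (ZMod n))) := by
      rw [Finset.disjoint_left]
      rintro e he hmem2
      rw [Finset.mem_image] at he
      obtain ⟨j, hj, rfl⟩ := he
      rw [Finset.mem_erase, Finset.mem_erase, Finset.mem_Icc] at hj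
      rcases Finset.mem_insert.mp hmem2 with h | h
      · rcases edge_eq_nat (by omega) (by omega) (by omega) (by omega) (by omega) h
          with ⟨g1, g2⟩ | ⟨g1, g2⟩ <;> omega
      · rw [Finset.mem_singleton] at h
        rcases edge_eq_nat (by omega) (by omega) (by omega) (by omega) (by omega) h
          with ⟨g1, g2⟩ | ⟨g1, g2⟩ <;> omega
    refine ⟨T, ?_, ?_, ?_, ?_⟩
    · -- cardinality
      rw [hTdef, Finset.card_union_of_disjoint hdisj,
        Finset.card_image_of_injOn hfaninj,
        Finset.card_erase_of_mem hSna, Finset.card_erase_of_mem hSa, Nat.card_Icc,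
        Finset.card_insert_of_notMem (by simpa using hne12), Finset.card_singleton]
      omega
    · -- diagonals
      intro e he
      rw [hTmem] at he
      rcases he with ⟨j, ⟨hj1, hj2, hj3, hj4⟩, rfl⟩ | rfl | rfl
      · constructor
        · intro hd
          rw [Sym2.mk_isDiag_iff] at hd
          rcases cast_eq_cases (by omega) (by omega) (by omega) hd with h | h | h <;> omega
        · rintro ⟨i, hi⟩
          rw [Sym2.eq_iff] at hi
          rcases hi with ⟨h1, h2⟩ | ⟨h1, h2⟩
          · rw [← h1] at h2
            have h3 : ((j:ℕ) : ZMod n) = ((0+1:ℕ) : ZMod n) := by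
              rw [h2]; norm_cast
            rcases cast_eq_cases (by omega) (by omega) (by omega) h3 with h | h | h <;> omega
          · rw [← h2] at h1
            have h3 : ((0:ℕ) : ZMod n) = ((j+1:ℕ) : ZMod n) := by
              rw [h1]; norm_cast
            rcases cast_eq_cases (by omega) (by omega) (by omega) h3 with h | h | h <;> omega
      · constructor
        · intro hd
          rw [Sym2.mk_isDiag_iff] at hd
          rcases cast_eq_cases (by omega) (by omega) (by omega) hd with h | h | h <;> omega
        · rintro ⟨i, hi⟩
          rw [Sym2.eq_iff] at hi
          rcases hi with ⟨h1, h2⟩ | ⟨h1, h2⟩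
          · rw [← h1] at h2
            have h3 : ((a+1:ℕ) : ZMod n) = ((a-1+1:ℕ) : ZMod n) := by
              rw [h2]; norm_cast
            rcases cast_eq_cases (by omega) (by omega) (by omega) h3 with h | h | h <;> omega
          · rw [← h2] at h1
            have h3 : ((a-1:ℕ) : ZMod n) = ((a+1+1:ℕ) : ZMod n) := by
              rw [h1]; norm_cast
            rcases cast_eq_cases (by omega) (by omega) (by omega) h3 with h | h | h <;> omega
      · constructor
        · intro hd
          rw [Sym2.mk_isDiag_iff] at hd
          rcases cast_eq_cases (by omega) (by omega) (by omega) hd with h | h | h <;> omega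
        · rintro ⟨i, hi⟩
          rw [Sym2.eq_iff] at hi
          rcases hi with ⟨h1, h2⟩ | ⟨h1, h2⟩
          · rw [← h1] at h2
            have h3 : ((n-a+1:ℕ) : ZMod n) = ((n-a-1+1:ℕ) : ZMod n) := by
              rw [h2]; norm_cast
            rcases cast_eq_cases (by omega) (by omega) (by omega) h3 with h | h | h <;> omega
          · rw [← h2] at h1
            have h3 : ((n-a-1:ℕ) : ZMod n) = ((n-a+1+1:ℕ) : ZMod n) := by
              rw [h1]; norm_cast
            rcases cast_eq_cases (by omega) (by omega) (by omega) h3 with h | h | h <;> omega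
    · -- pairwise non-crossing
      intro e he f hf
      rw [hTmem] at he hf
      rcases he with ⟨j, ⟨hj1, hj2, hj3, hj4⟩, rfl⟩ | rfl | rfl <;>
        rcases hf with ⟨k, ⟨hk1, hk2, hk3, hk4⟩, rfl⟩ | rfl | rfl
      · exact noCross (by omega) (by omega) (by omega) (by omega) (by omega)
      · exact noCross (by omega) (by omega) (by omega) (by omega) (by omega)
      · exact noCross (by omega) (by omega) (by omega) (by omega) (by omega)
      · exact noCross (by omega) (by omega) (by omega) (by omega) (by omega)
      · exact noCross (by omega) (by omega) (by omega) (by omega) (by omega)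
      · exact noCross (by omega) (by omega) (by omega) (by omega) (by omega)
      · exact noCross (by omega) (by omega) (by omega) (by omega) (by omega)
      · exact noCross (by omega) (by omega) (by omega) (by omega) (by omega)
      · exact noCross (by omega) (by omega) (by omega) (by omega) (by omega)
    · -- disjoint from F
      intro e he heF
      rw [hTmem] at he
      rw [hFmem] at heF
      obtain ⟨k, hk, hk2⟩ := heF
      rcases he with ⟨j, ⟨hj1, hj2, hj3, hj4⟩, rfl⟩ | rfl | rfl
      · rw [Sym2.eq_iff] at hk2
        rcases hk2 with ⟨h1, h2⟩ | ⟨h1, h2⟩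
        · rw [← h1] at h2
          have h3 : ((j:ℕ) : ZMod n) = ((0+a:ℕ) : ZMod n) := by
            rw [h2]; norm_cast
          rcases cast_eq_cases (by omega) (by omega) (by omega) h3 with h | h | h <;> omega
        · rw [← h2] at h1
          have h3 : ((0:ℕ) : ZMod n) = ((j+a:ℕ) : ZMod n) := by
            rw [h1]; norm_cast
          rcases cast_eq_cases (by omega) (by omega) (by omega) h3 with h | h | h <;> omega
      · rw [Sym2.eq_iff] at hk2
        rcases hk2 with ⟨h1, h2⟩ | ⟨h1, h2⟩
        · rw [← h1] at h2
          have h3 : ((a+1:ℕ) : ZMod n) = ((a-1+a:ℕ) : ZMod n) := by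
            rw [h2]; norm_cast
          rcases cast_eq_cases (by omega) (by omega) (by omega) h3 with h | h | h <;> omega
        · rw [← h2] at h1
          have h3 : ((a-1:ℕ) : ZMod n) = ((a+1+a:ℕ) : ZMod n) := by
            rw [h1]; norm_cast
          rcases cast_eq_cases (by omega) (by omega) (by omega) h3 with h | h | h <;> omega
      · rw [Sym2.eq_iff] at hk2
        rcases hk2 with ⟨h1, h2⟩ | ⟨h1, h2⟩
        · rw [← h1] at h2
          have h3 : ((n-a+1:ℕ) : ZMod n) = ((n-a-1+a:ℕ) : ZMod n) := by
            rw [h2]; norm_cast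
          rcases cast_eq_cases (by omega) (by omega) (by omega) h3 with h | h | h <;> omega
        · rw [← h2] at h1
          have h3 : ((n-a-1:ℕ) : ZMod n) = ((n-a+1+a:ℕ) : ZMod n) := by
            rw [h1]; norm_cast
          rcases cast_eq_cases (by omega) (by omega) (by omega) h3 with h | h | h <;> omega


lemma coprime_lemma (n s t : ℕ) (hs : 1 ≤ s) (ht : Odd t) (hnst : n = 2 ^ s * t) :
    Nat.Coprime (t + 2) n := by
  rw [hnst]
  apply Nat.Coprime.mul_right
  · exact Nat.Coprime.pow_right s
      (Nat.coprime_two_right.mpr (by obtain ⟨m, rfl⟩ := ht; exact ⟨m + 1, by ring⟩))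
  · rw [show t + 2 = 2 + t from by omega, Nat.coprime_add_self_left]
    exact Nat.coprime_two_left.mpr ht

lemma facts (n s t : ℕ) (hn : 8 ≤ n) (hs : 1 ≤ s) (ht : Odd t) (hnst : n = 2 ^ s * t) :
    3 ≤ t + 2 ∧ (t + 2) + 3 ≤ n ∧ 2*(t+2) ≠ n ∧ 2*(t+2) ≠ n + 2 ∧ n % 2 = 0 := by
  have hta : t % 2 = 1 := Nat.odd_iff.mp ht
  have h2s : 2 ≤ 2^s := by
    calc (2:ℕ) = 2^1 := (pow_one 2).symm
    _ ≤ 2^s := Nat.pow_le_pow_right (by norm_num) hs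
  have h2t : 2*t ≤ n := by
    rw [hnst]; exact Nat.mul_le_mul_right t h2s
  have hs1 : s = 1 → n = 2*t := by intro h; rw [hnst, h, pow_one]
  have hs2 : 2 ≤ s → 4*t ≤ n := by
    intro h
    have h4 : (4:ℕ) = 2^2 := by norm_num
    rw [hnst, h4]
    exact Nat.mul_le_mul_right t (Nat.pow_le_pow_right (by norm_num) h)
  have hpar : n % 2 = 0 := by
    obtain ⟨s', rfl⟩ : ∃ s', s = s' + 1 := ⟨s-1, by omega⟩
    have h5 : n = 2 * (2^s' * t) := by rw [hnst, pow_succ]; ring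
    omega
  have hcase : s = 1 ∨ 2 ≤ s := by omega
  rcases hcase with h | h
  · have := hs1 h; refine ⟨by omega, by omega, by omega, by omega, hpar⟩
  · have := hs2 h; refine ⟨by omega, by omega, by omega, by omega, hpar⟩

/-- For even `n ≥ 8` with `n = 2^s * t`, `s ≥ 1`, `t` odd and `α = t + 2`:
`gcd(α, n) = 1`, the edges `v_{iα}v_{(i+1)α}` form a Hamiltonian cycle of the convex `K_n`
containing no boundary edge, and `K_n - H` admits a triangulation. -/
theorem stmt12 (n s t : ℕ) (hn : 8 ≤ n) (hs : 1 ≤ s) (ht : Odd t)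
    (hnst : n = 2 ^ s * t) :
    Nat.gcd (t + 2) n = 1 ∧
    IsHamCycle n
      (Finset.image
        (fun i : ℕ => s(((t + 2 : ℕ) : ZMod n) * (i : ZMod n),
          ((t + 2 : ℕ) : ZMod n) * ((i : ZMod n) + 1))) (Finset.range n)) ∧
    (∀ e ∈ Finset.image
        (fun i : ℕ => s(((t + 2 : ℕ) : ZMod n) * (i : ZMod n),
          ((t + 2 : ℕ) : ZMod n) * ((i : ZMod n) + 1))) (Finset.range n),
      ¬ IsBoundary n e) ∧
    AdmitsTriangulation n
      (Finset.image
        (fun i : ℕ => s(((t + 2 : ℕ) : ZMod n) * (i : ZMod n),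
          ((t + 2 : ℕ) : ZMod n) * ((i : ZMod n) + 1))) (Finset.range n)) := by
  have hcop : Nat.Coprime (t + 2) n := coprime_lemma n s t hs ht hnst
  obtain ⟨ha3, han, h2an, h2an2, hpar⟩ := facts n s t hn hs ht hnst
  obtain ⟨hham, hnb, htri⟩ := main_s12 hn ha3 han h2an h2an2 hpar hcop
  exact ⟨hcop, hham, hnb, htri⟩

end ConvexTri
end
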